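/- arXiv:1210.5189 — 9 statements merged into one kernel-verified Lean document; each statement's English description precedes it below -/
import Mathlib

section
/- The growth rate of the odd model is √2; that is, lim_{N→∞} (Zodd(N))^(1/N²) = √2. -/
/-!
Along a single row or column the odd constraint says exactly that all `⊖` spins sit at positions
of one parity: consecutive `⊖` spins are an even distance apart, and conversely two `⊖` spins of
equal parity with only `⊕` between them enclose an odd number of `⊕`. Hence every configuration
that is `⊕` off the checkerboard `{(i, j) | i ≡ j mod 2}` is admissible, so `Zodd N ≥ 2 ^ (N² - N)/2`.
Conversely an admissible configuration is `⊕` off the stripes `{(i, j) | j ≡ r i mod 2}`, where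
`r i` is the parity of the `⊖` spins in row `i`; summing over the `2 ^ N` choices of `r` gives
`Zodd N ≤ 2 ^ (N² + 3N)/2`. Both exponents are `N²/2 + O(N)`.
-/

open Filter

/-- The odd constraint: any two `⊖` spins (`false`) in the same row or column
with only `⊕` spins (`true`) strictly between them are separated by an odd
number of `⊕` spins. -/
def OddConstraint (N : ℕ) (x : Fin N × Fin N → Bool) : Prop :=
  (∀ i a b : Fin N, a < b → x (i, a) = false → x (i, b) = false →
      (∀ c : Fin N, a < c → c < b → x (i, c) = true) → Odd ((b : ℕ) - a - 1)) ∧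
  (∀ j a b : Fin N, a < b → x (a, j) = false → x (b, j) = false →
      (∀ c : Fin N, a < c → c < b → x (c, j) = true) → Odd ((b : ℕ) - a - 1))

/-- The number of configurations on the `N × N` grid satisfying the odd
constraint. -/
noncomputable def Zodd (N : ℕ) : ℕ :=
  Nat.card {x : Fin N × Fin N → Bool // OddConstraint N x}

open Finset

def OddSpacing {n : ℕ} (g : Fin n → Bool) : Prop :=
  ∀ a b : Fin n, a < b → g a = false → g b = false →
    (∀ c : Fin n, a < c → c < b → g c = true) → Odd ((b : ℕ) - a - 1)

theorem oddSpacing_iff {n : ℕ} {g : Fin n → Bool} :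
    OddSpacing g ↔ ∀ a b : Fin n, g a = false → g b = false → (a : ℕ) % 2 = b % 2 := by
  refine ⟨fun h => ?_, fun h a b hab ha hb _ => ?_⟩
  · suffices key : ∀ d (a b : Fin n), (b : ℕ) - a = d → a < b → g a = false → g b = false →
        (a : ℕ) % 2 = b % 2 by
      intro a b ha hb
      rcases lt_trichotomy a b with hab | rfl | hba
      · exact key _ a b rfl hab ha hb
      · rfl
      · exact (key _ b a rfl hba hb ha).symm
    intro d
    induction d using Nat.strong_induction_on with
    | _ d ih =>
      intro a b hd hab ha hb
      by_cases hc : ∃ c, a < c ∧ c < b ∧ g c = false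
      · obtain ⟨c, hac, hcb, hc⟩ := hc
        have h₁ := ih _ (by omega) a c rfl hac ha hc
        have h₂ := ih _ (by omega) c b rfl hcb hc hb
        omega
      · push Not at hc
        obtain ⟨k, hk⟩ := h a b hab ha hb fun c hac hcb => by simpa using hc c hac hcb
        omega
  · have := h a b ha hb
    rw [Nat.odd_iff]
    omega

theorem oddConstraint_iff {N : ℕ} {x : Fin N × Fin N → Bool} :
    OddConstraint N x ↔
      (∀ i a b : Fin N, x (i, a) = false → x (i, b) = false → (a : ℕ) % 2 = b % 2) ∧
      (∀ j a b : Fin N, x (a, j) = false → x (b, j) = false → (a : ℕ) % 2 = b % 2) :=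
  and_congr (forall_congr' fun i => oddSpacing_iff (g := fun j => x (i, j)))
    (forall_congr' fun j => oddSpacing_iff (g := fun i => x (i, j)))

section PlusOutside

variable {α : Type*} [Fintype α] [DecidableEq α]

def plusOutside (A : Finset α) : Finset (α → Bool) :=
  Fintype.piFinset fun a => if a ∈ A then univ else {true}

theorem mem_plusOutside {A : Finset α} {x : α → Bool} :
    x ∈ plusOutside A ↔ ∀ a ∉ A, x a = true := by
  simp only [plusOutside, Fintype.mem_piFinset]
  refine forall_congr' fun a => ?_
  split_ifs with ha <;> simp [ha]

theorem card_plusOutside (A : Finset α) : #(plusOutside A) = 2 ^ #A := by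
  simp only [plusOutside, Fintype.card_piFinset, apply_ite Finset.card, card_univ,
    Fintype.card_bool, card_singleton]
  rw [Fintype.prod_ite_mem, prod_const]

end PlusOutside

def stripes {N : ℕ} (ρ : Fin N → ℕ) : Finset (Fin N × Fin N) :=
  univ.filter fun p => (p.2 : ℕ) % 2 = ρ p.1

theorem card_filter_mod_two_eq (N r : ℕ) (hr : r < 2) :
    #(univ.filter fun j : Fin N => (j : ℕ) % 2 = r) = (N + 1 - r) / 2 := by
  rw [card_filter, Fin.sum_univ_eq_sum_range (fun j => if j % 2 = r then 1 else 0)]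
  induction N with
  | zero => simp; omega
  | succ n ih =>
    rw [sum_range_succ, ih]
    split_ifs <;> omega

theorem card_stripes {N : ℕ} {ρ : Fin N → ℕ} (hρ : ∀ i, ρ i < 2) :
    #(stripes ρ) = ∑ i, (N + 1 - ρ i) / 2 := by
  rw [stripes, card_filter, Fintype.sum_prod_type]
  refine sum_congr rfl fun i _ => ?_
  rw [← card_filter, card_filter_mod_two_eq N _ (hρ i)]

theorem card_stripes_bounds {N : ℕ} {ρ : Fin N → ℕ} (hρ : ∀ i, ρ i < 2) :
    N * N ≤ 2 * #(stripes ρ) + N ∧ 2 * #(stripes ρ) ≤ N * N + N := by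
  have h : ∀ i, N ≤ 2 * ((N + 1 - ρ i) / 2) + 1 ∧ 2 * ((N + 1 - ρ i) / 2) ≤ N + 1 :=
    fun i => by have := hρ i; omega
  rw [card_stripes hρ, mul_sum]
  constructor
  · simpa [sum_add_distrib] using card_nsmul_le_sum univ _ N fun i _ => (h i).1
  · simpa [mul_add] using sum_le_card_nsmul univ _ (N + 1) fun i _ => (h i).2

theorem zodd_eq_card_filter (N : ℕ) [DecidablePred (OddConstraint N)] :
    Zodd N = #(univ.filter (OddConstraint N)) := by
  rw [Zodd, Nat.card_eq_fintype_card, Fintype.card_subtype]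

theorem pow_card_stripes_le_zodd (N : ℕ) :
    2 ^ #(stripes fun i : Fin N => (i : ℕ) % 2) ≤ Zodd N := by
  classical
  rw [zodd_eq_card_filter, ← card_plusOutside]
  refine card_le_card fun x hx => mem_filter.2 ⟨mem_univ x, oddConstraint_iff.2 ?_⟩
  have hpar : ∀ p, x p = false → (p.2 : ℕ) % 2 = p.1 % 2 := fun p hp => by
    by_contra h
    simp [mem_plusOutside.1 hx p (by simpa [stripes] using h)] at hp
  exact ⟨fun i a b ha hb => (hpar _ ha).trans (hpar _ hb).symm,
    fun j a b ha hb => (hpar _ ha).symm.trans (hpar _ hb)⟩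

theorem zodd_le_sum_pow_card_stripes (N : ℕ) :
    Zodd N ≤ ∑ r : Fin N → Bool, 2 ^ #(stripes fun i => (r i).toNat) := by
  classical
  rw [zodd_eq_card_filter]
  refine (card_le_card fun x hx => ?_).trans
    ((card_biUnion_le).trans_eq (sum_congr rfl fun r _ => card_plusOutside _))
  have hrow := (oddConstraint_iff.1 (mem_filter.1 hx).2).1
  refine mem_biUnion.2 ⟨fun i => decide (∃ j : Fin N, x (i, j) = false ∧ (j : ℕ) % 2 = 1),
    mem_univ _, mem_plusOutside.2 fun p hp => ?_⟩
  simp only [stripes, mem_filter, mem_univ, true_and] at hp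
  by_contra hxp
  rw [Bool.not_eq_true] at hxp
  by_cases hodd : ∃ j : Fin N, x (p.1, j) = false ∧ (j : ℕ) % 2 = 1
  · simp only [hodd, decide_true, Bool.toNat_true] at hp
    obtain ⟨j, hj, hj1⟩ := hodd
    have := hrow p.1 j p.2 hj hxp
    omega
  · simp only [hodd, decide_false, Bool.toNat_false] at hp
    exact hodd ⟨p.2, hxp, by simpa using hp⟩

theorem two_rpow_le_zodd (N : ℕ) : (2 : ℝ) ^ (((N : ℝ) ^ 2 + -1 * N) / 2) ≤ Zodd N := by
  set S := stripes fun i : Fin N => (i : ℕ) % 2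
  have hS : ((N : ℝ) ^ 2 + -1 * N) / 2 ≤ #S := by
    have := (card_stripes_bounds (ρ := fun i : Fin N => (i : ℕ) % 2)
      fun i => Nat.mod_lt _ two_pos).1
    have : (N : ℝ) * N ≤ 2 * #S + N := by exact_mod_cast this
    linarith
  calc (2 : ℝ) ^ (((N : ℝ) ^ 2 + -1 * N) / 2) ≤ 2 ^ (#S : ℝ) :=
        Real.rpow_le_rpow_of_exponent_le one_le_two hS
    _ = ((2 ^ #S : ℕ) : ℝ) := by norm_cast
    _ ≤ Zodd N := by exact_mod_cast pow_card_stripes_le_zodd N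

theorem zodd_le_two_rpow (N : ℕ) : (Zodd N : ℝ) ≤ 2 ^ (((N : ℝ) ^ 2 + 3 * N) / 2) := by
  have hrow : ∀ r : Fin N → Bool,
      ((2 ^ #(stripes fun i => (r i).toNat) : ℕ) : ℝ) ≤ 2 ^ (((N : ℝ) ^ 2 + N) / 2) := by
    intro r
    have := (card_stripes_bounds (ρ := fun i => (r i).toNat) fun i => Bool.toNat_lt _).2
    have : (2 : ℝ) * #(stripes fun i => (r i).toNat) ≤ N * N + N := by exact_mod_cast this
    rw [Nat.cast_pow, Nat.cast_ofNat, ← Real.rpow_natCast]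
    exact Real.rpow_le_rpow_of_exponent_le one_le_two (by linarith)
  calc (Zodd N : ℝ) ≤ ∑ r : Fin N → Bool, ((2 ^ #(stripes fun i => (r i).toNat) : ℕ) : ℝ) := by
        exact_mod_cast zodd_le_sum_pow_card_stripes N
    _ ≤ ∑ _r : Fin N → Bool, (2 : ℝ) ^ (((N : ℝ) ^ 2 + N) / 2) := sum_le_sum fun r _ => hrow r
    _ = 2 ^ (N : ℝ) * 2 ^ (((N : ℝ) ^ 2 + N) / 2) := by
        simp [sum_const, card_univ, Real.rpow_natCast]
    _ = 2 ^ (((N : ℝ) ^ 2 + 3 * N) / 2) := by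
        rw [← Real.rpow_add two_pos]
        ring_nf

theorem tendsto_two_rpow_sq_add_mul_rpow_inv_sq (c : ℝ) :
    Tendsto (fun N : ℕ => ((2 : ℝ) ^ (((N : ℝ) ^ 2 + c * N) / 2)) ^ (1 / (N : ℝ) ^ 2)) atTop
      (nhds (Real.sqrt 2)) := by
  have hexp : Tendsto (fun N : ℕ => (1 + c * (N : ℝ)⁻¹) / 2) atTop (nhds (1 / 2)) := by
    simpa using (((tendsto_inv_atTop_zero.comp tendsto_natCast_atTop_atTop).const_mul c).const_add
      1).div_const 2
  rw [Real.sqrt_eq_rpow]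
  refine (tendsto_const_nhds.rpow hexp (Or.inl two_ne_zero)).congr' ?_
  filter_upwards [eventually_ne_atTop 0] with N hN
  rw [← Real.rpow_mul zero_le_two]
  congr 1
  field_simp

/-- The growth rate of the odd model is `√2`:
`lim_{N → ∞} Zodd(N) ^ (1 / N²) = √2`. -/
theorem odd_growth_rate :
    Tendsto (fun N : ℕ => (Zodd N : ℝ) ^ (1 / (N : ℝ) ^ 2))
      atTop (nhds (Real.sqrt 2)) :=
  tendsto_of_tendsto_of_tendsto_of_le_of_le
    (tendsto_two_rpow_sq_add_mul_rpow_inv_sq (-1)) (tendsto_two_rpow_sq_add_mul_rpow_inv_sq 3)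
    (fun N => Real.rpow_le_rpow (by positivity) (two_rpow_le_zodd N) (by positivity))
    (fun N => Real.rpow_le_rpow (Nat.cast_nonneg _) (zodd_le_two_rpow N) (by positivity))
end

section
/- For every N ≥ 1, the number of configurations on the 2N×2N grid satisfying the odd constraint is at least 2^(2N²). (Place ⊕ spins in a checkerboard pattern; the remaining 2N² spins may then be assigned arbitrarily and the resulting configuration always satisfies the odd constraint.) -/
/-! Configurations that are `⊕` on every site `(i, j)` with `i + j` even satisfy the odd constraint:
two `⊖` spins in a row or column then sit at positions of equal parity, so an odd number of sites
lies strictly between them. On the `2N × 2N` grid the remaining sites are the `2N²` sites with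
`i + j` odd, and these can be filled arbitrarily. -/

theorem oddConstraint_of_forall_even_true {n : ℕ} {x : Fin n × Fin n → Bool}
    (hx : ∀ i j : Fin n, Even ((i : ℕ) + j) → x (i, j) = true) : OddConstraint n x := by
  have odd_of_false : ∀ i j : Fin n, x (i, j) = false → Odd ((i : ℕ) + j) := fun i j h ↦
    Nat.not_even_iff_odd.mp fun he ↦ by simp [hx i j he] at h
  constructor
  · intro i a b hab ha hb _
    have := odd_of_false i a ha
    have := odd_of_false i b hb
    rw [Fin.lt_def] at hab
    grind
  · intro j a b hab ha hb _
    have := odd_of_false a j ha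
    have := odd_of_false b j hb
    rw [Fin.lt_def] at hab
    grind

/-- `(i, k)` is sent to the `k`-th site `(i, j)` of row `i` with `i + j` odd. -/
def oddSite {n m : ℕ} (p : Fin n × Fin m) : Fin n × Fin (2 * m) :=
  (p.1, ⟨2 * p.2 + (p.1 + 1) % 2, by omega⟩)

theorem oddSite_injective {n m : ℕ} : Function.Injective (oddSite (n := n) (m := m)) := by
  rintro ⟨i, k⟩ ⟨i', k'⟩ h
  simp only [oddSite, Prod.mk.injEq, Fin.ext_iff] at h ⊢
  omega

theorem odd_add_oddSite {n m : ℕ} (p : Fin n × Fin m) :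
    Odd (((oddSite p).1 : ℕ) + (oddSite p).2) := by
  simp only [oddSite, Nat.odd_iff]
  omega

theorem odd_lower_bound_general (N : ℕ) :
    2 ^ (2 * N ^ 2) ≤ Zodd (2 * N) := by
  let fill (g : Fin (2 * N) × Fin N → Bool) : Fin (2 * N) × Fin (2 * N) → Bool :=
    Function.extend oddSite g fun _ ↦ true
  have fill_even : ∀ g (i j : Fin (2 * N)), Even ((i : ℕ) + j) → fill g (i, j) = true := by
    intro g i j he
    refine Function.extend_apply' _ _ _ ?_
    rintro ⟨p, hp⟩
    have := odd_add_oddSite p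
    rw [hp] at this
    exact Nat.not_even_iff_odd.mpr this he
  calc 2 ^ (2 * N ^ 2) = Nat.card (Fin (2 * N) × Fin N → Bool) := by simp; ring
    _ ≤ Zodd (2 * N) :=
      Nat.card_le_card_of_injective (fun g ↦ ⟨fill g, oddConstraint_of_forall_even_true (fill_even g)⟩)
        fun _ _ h ↦ Function.extend_injective oddSite_injective _ (congrArg Subtype.val h)

/-- For every `N ≥ 1`, the number of configurations on the `2N × 2N` grid
satisfying the odd constraint is at least `2 ^ (2N²)`. -/
theorem odd_lower_bound (N : ℕ) (hN : 1 ≤ N) :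
    2 ^ (2 * N ^ 2) ≤ Zodd (2 * N) :=
  odd_lower_bound_general N
end

section
/- Let c_n be the number of words x : Fin n → Bool satisfying the one-dimensional odd constraint. Then lim_{n→∞} (c_n)^(1/n) = √2. -/
open Filter

/-- The one-dimensional odd constraint: any two `⊖` spins (`false`) with only
`⊕` spins (`true`) strictly between them are separated by an odd number of `⊕`
spins. -/
def OddWord (n : ℕ) (x : Fin n → Bool) : Prop :=
  ∀ a b : Fin n, a < b → x a = false → x b = false →
    (∀ c : Fin n, a < c → c < b → x c = true) → Odd ((b : ℕ) - a - 1)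

/-- The number of words of length `n` satisfying the one-dimensional odd
constraint. -/
noncomputable def oddWordCount (n : ℕ) : ℕ :=
  Nat.card {x : Fin n → Bool // OddWord n x}

/-!
Two consecutive `⊖` spins sit an even distance apart, so all `⊖` spins of an odd word have
the same parity; conversely every such word is odd. Hence the odd words are exactly the words
whose `⊖` spins all lie on the even sites or all on the odd sites, and
`2 ^ ⌊n/2⌋ ≤ c_n ≤ 2 ^ ⌈n/2⌉ + 2 ^ ⌊n/2⌋`. Both bounds are `√2 ^ n` up to constant factors.
-/

open Finset

theorem apply_eq_apply_of_consecutive {α β : Type*} [LinearOrder α] [LocallyFiniteOrder α]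
    {s : α → Prop} {f : α → β}
    (h : ∀ a b, a < b → s a → s b → (∀ c, a < c → c < b → ¬ s c) → f a = f b)
    {a b : α} (ha : s a) (hb : s b) : f a = f b := by
  wlog hab : a < b generalizing a b
  · rcases (not_lt.1 hab).eq_or_lt with rfl | hba
    · rfl
    · exact (this hb ha hba).symm
  induction hk : #(Ioo a b) using Nat.strong_induction_on generalizing a b with
  | _ k ih =>
    by_cases hgap : ∀ c, a < c → c < b → ¬ s c
    · exact h a b hab ha hb hgap
    push Not at hgap
    obtain ⟨c, hac, hcb, hc⟩ := hgap
    have hc_mem : c ∈ Ioo a b := mem_Ioo.2 ⟨hac, hcb⟩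
    have left : #(Ioo a c) < k := hk ▸ card_lt_card
      ((ssubset_iff_of_subset (Ioo_subset_Ioo_right hcb.le)).2 ⟨c, hc_mem, by simp⟩)
    have right : #(Ioo c b) < k := hk ▸ card_lt_card
      ((ssubset_iff_of_subset (Ioo_subset_Ioo_left hac.le)).2 ⟨c, hc_mem, by simp⟩)
    exact (ih _ left ha hc hac rfl).trans (ih _ right hc hb hcb rfl)

theorem card_bool_fun_forall_false_imp {α : Type*} [Fintype α] (p : α → Prop) [DecidablePred p] :
    Nat.card {x : α → Bool // ∀ i, x i = false → p i} = 2 ^ #{i | p i} := by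
  classical
  have : ({x | ∀ i, x i = false → p i} : Finset (α → Bool)) =
      Fintype.piFinset fun i => if p i then univ else {true} := by
    ext x
    simp only [mem_filter_univ, Fintype.mem_piFinset]
    refine forall_congr' fun i => ?_
    split_ifs with hp <;> cases x i <;> simp [hp]
  rw [Nat.card_eq_fintype_card, Fintype.card_subtype, this, Fintype.card_piFinset]
  simp [apply_ite Finset.card, prod_ite, prod_const]

theorem card_fin_mod_two_eq_one (n : ℕ) : #{i : Fin n | (i : ℕ) % 2 = 1} = n / 2 := by
  rw [← Nat.card_multiples n 2, ← card_map Fin.valEmbedding, map_filter',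
    Fin.map_valEmbedding_univ]
  congr 1
  ext e
  simp only [mem_filter, mem_Iio, mem_range, Nat.dvd_iff_mod_eq_zero, Fin.valEmbedding_apply]
  constructor
  · rintro ⟨he, a, ha, rfl⟩
    exact ⟨he, by omega⟩
  · rintro ⟨he, h2⟩
    exact ⟨he, ⟨e, he⟩, show e % 2 = 1 by omega, rfl⟩

theorem card_fin_mod_two_eq_zero (n : ℕ) : #{i : Fin n | (i : ℕ) % 2 = 0} = (n + 1) / 2 := by
  have := card_filter_add_card_filter_not (s := (univ : Finset (Fin n)))
    (fun i : Fin n => (i : ℕ) % 2 = 0)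
  simp only [Nat.mod_two_ne_zero, card_fin_mod_two_eq_one, card_univ, Fintype.card_fin] at this
  omega

section OddWord

variable {n : ℕ} {x : Fin n → Bool}

theorem OddWord.mod_two_eq (hx : OddWord n x) {a b : Fin n} (ha : x a = false)
    (hb : x b = false) : (a : ℕ) % 2 = b % 2 := by
  refine apply_eq_apply_of_consecutive (s := (x · = false)) (f := fun i : Fin n => (i : ℕ) % 2)
    (fun a b hab ha hb hgap => ?_) ha hb
  have hodd := Nat.odd_iff.1 (hx a b hab ha hb fun c hac hcb => by simpa using hgap c hac hcb)
  have : (a : ℕ) < b := hab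
  omega

theorem oddWord_iff : OddWord n x ↔
    (∀ i, x i = false → (i : ℕ) % 2 = 0) ∨ (∀ i, x i = false → (i : ℕ) % 2 = 1) := by
  constructor
  · intro hx
    by_cases hminus : ∃ i, x i = false
    · obtain ⟨i, hi⟩ := hminus
      rcases Nat.mod_two_eq_zero_or_one i with h | h
      · exact .inl fun j hj => (hx.mod_two_eq hj hi).trans h
      · exact .inr fun j hj => (hx.mod_two_eq hj hi).trans h
    · push Not at hminus
      exact .inl fun i hi => absurd hi (by simp [hminus i])
  · rintro (h | h) a b hab ha hb -
    all_goals
      have := h a ha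
      have := h b hb
      have : (a : ℕ) < b := hab
      rw [Nat.odd_iff]
      omega

end OddWord

theorem two_pow_le_oddWordCount (n : ℕ) : 2 ^ (n / 2) ≤ oddWordCount n :=
  calc 2 ^ (n / 2) = Nat.card {x : Fin n → Bool // ∀ i, x i = false → (i : ℕ) % 2 = 1} := by
        rw [card_bool_fun_forall_false_imp, card_fin_mod_two_eq_one]
    _ ≤ oddWordCount n := Nat.card_le_card_of_injective _
        (Subtype.impEmbedding _ _ fun _ hx => oddWord_iff.2 (.inr hx)).injective

theorem oddWordCount_le (n : ℕ) : oddWordCount n ≤ 2 ^ ((n + 1) / 2) + 2 ^ (n / 2) :=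
  calc oddWordCount n = Nat.card {x : Fin n → Bool //
        (∀ i, x i = false → (i : ℕ) % 2 = 0) ∨ (∀ i, x i = false → (i : ℕ) % 2 = 1)} :=
        Nat.card_congr (Equiv.subtypeEquivRight fun _ => oddWord_iff)
    _ ≤ Nat.card {x : Fin n → Bool // ∀ i, x i = false → (i : ℕ) % 2 = 0} +
        Nat.card {x : Fin n → Bool // ∀ i, x i = false → (i : ℕ) % 2 = 1} := by
        simpa only [Nat.card_eq_fintype_card] using Fintype.card_subtype_or _ _
    _ = 2 ^ ((n + 1) / 2) + 2 ^ (n / 2) := by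
        rw [card_bool_fun_forall_false_imp, card_bool_fun_forall_false_imp,
          card_fin_mod_two_eq_zero, card_fin_mod_two_eq_one]

theorem tendsto_rpow_one_div_of_le_of_le {u : ℕ → ℝ} {a c C : ℝ} (ha : 0 ≤ a) (hc : 0 < c)
    (hlow : ∀ n, c * a ^ n ≤ u n) (hup : ∀ n, u n ≤ C * a ^ n) :
    Tendsto (fun n : ℕ => u n ^ (1 / (n : ℝ))) atTop (nhds a) := by
  have hC : 0 < C := hc.trans_le (by simpa using (hlow 0).trans (hup 0))
  have root {d : ℝ} (hd : 0 < d) :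
      Tendsto (fun n : ℕ => (d * a ^ n) ^ (1 / (n : ℝ))) atTop (nhds a) := by
    have hlim : Tendsto (fun n : ℕ => d ^ (1 / (n : ℝ)) * a) atTop (nhds (d ^ (0 : ℝ) * a)) :=
      (tendsto_const_nhds.rpow tendsto_one_div_atTop_nhds_zero_nat (.inl hd.ne')).mul_const a
    rw [Real.rpow_zero, one_mul] at hlim
    refine hlim.congr' ?_
    filter_upwards [eventually_ne_atTop 0] with n hn
    rw [Real.mul_rpow hd.le (by positivity), one_div, Real.pow_rpow_inv_natCast ha hn]
  refine tendsto_of_tendsto_of_tendsto_of_le_of_le (root hc) (root hC) (fun n => ?_) (fun n => ?_)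
  · exact Real.rpow_le_rpow (by positivity) (hlow n) (by positivity)
  · exact Real.rpow_le_rpow ((by positivity : 0 ≤ c * a ^ n).trans (hlow n)) (hup n)
      (by positivity)

/-- `lim_{n → ∞} (c_n) ^ (1/n) = √2`, where `c_n` is the number of words of
length `n` satisfying the one-dimensional odd constraint. -/
theorem oddWord_growth_rate :
    Tendsto (fun n : ℕ => (oddWordCount n : ℝ) ^ (1 / (n : ℝ)))
      atTop (nhds (Real.sqrt 2)) := by
  have one_le : 1 ≤ √2 := Real.one_le_sqrt.2 one_le_two
  have two_pow (k : ℕ) : (2 : ℝ) ^ k = √2 ^ (2 * k) := by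
    rw [pow_mul, Real.sq_sqrt zero_le_two]
  refine tendsto_rpow_one_div_of_le_of_le (c := (√2)⁻¹) (C := 2 * √2) (Real.sqrt_nonneg 2)
    (by positivity) (fun n => ?_) (fun n => ?_)
  · calc (√2)⁻¹ * √2 ^ n ≤ (√2)⁻¹ * √2 ^ (2 * (n / 2) + 1) := by gcongr; omega
      _ = 2 ^ (n / 2) := by rw [pow_succ, ← two_pow]; field_simp
      _ ≤ oddWordCount n := by exact_mod_cast two_pow_le_oddWordCount n
  · calc (oddWordCount n : ℝ) ≤ 2 ^ ((n + 1) / 2) + 2 ^ (n / 2) := by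
          exact_mod_cast oddWordCount_le n
      _ ≤ √2 ^ (n + 1) + √2 ^ (n + 1) := by
          rw [two_pow, two_pow]; gcongr <;> omega
      _ = 2 * √2 * √2 ^ n := by ring
end

section
/- For every N ≥ 1, Zc3(N) ≤ ZQ(N) ≤ 4^(2N) · Zc3(N). Consequently limsup_{N→∞} (Zc3(N))^(1/N²) = limsup_{N→∞} (ZQ(N))^(1/N²), i.e. the growth rates of the charge(3) and Q-charge models are equal. -/
open Filter

/-- A spin configuration: every spin is `+1` or `-1`. -/
def IsSpinConfig (N : ℕ) (x : Fin N × Fin N → ℤ) : Prop :=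
  ∀ p, x p = 1 ∨ x p = -1

/-- The charge(3) constraint: every horizontal or vertical partial sum has
absolute value at most 3. -/
def Charge3 (N : ℕ) (x : Fin N × Fin N → ℤ) : Prop :=
  (∀ i a b : Fin N, a ≤ b → |∑ j ∈ Finset.Icc a b, x (i, j)| ≤ 3) ∧
  (∀ j a b : Fin N, a ≤ b → |∑ i ∈ Finset.Icc a b, x (i, j)| ≤ 3)

/-- The number of spin configurations on the `N × N` grid satisfying the
charge(3) constraint. -/
noncomputable def Zc3 (N : ℕ) : ℕ :=
  Nat.card {x : Fin N × Fin N → ℤ // IsSpinConfig N x ∧ Charge3 N x}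

/-- The `Q`-charge constraint on bond states: around every vertex, the south
and east bond states differ from the north and west bond states (respectively)
by a common `s ∈ {+1, -1}`. -/
def QValid (N : ℕ) (h : Fin N × Fin (N + 1) → Fin 4)
    (v : Fin (N + 1) × Fin N → Fin 4) : Prop :=
  ∀ i j : Fin N, ∃ s : ℤ, (s = 1 ∨ s = -1) ∧
    ((h (i, j.succ) : ℤ) - (h (i, j.castSucc) : ℤ) = s) ∧
    ((v (i.succ, j) : ℤ) - (v (i.castSucc, j) : ℤ) = s)

/-- The number of `Q`-charge configurations on the `N × N` grid. -/
noncomputable def ZQ (N : ℕ) : ℕ :=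
  Nat.card {p : (Fin N × Fin (N + 1) → Fin 4) × (Fin (N + 1) × Fin N → Fin 4) //
    QValid N p.1 p.2}

/-!
A `±1`-sequence all of whose interval sums lie in `[-3, 3]` is exactly the sequence of increments
of a height function with values in `{0, 1, 2, 3}` (its partial sums shifted by their minimum), and
such a height function is determined by its starting value. A `Q`-charge configuration is therefore
a charge(3) configuration together with the starting heights of its `N` rows and `N` columns, so
`Zc3 N ≤ ZQ N ≤ 4 ^ (2 * N) * Zc3 N`, and the factor `4 ^ (2 * N)` disappears under the
`N ^ 2`-th root.
-/

open Finset Topology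

section Height

variable {n : ℕ} {y : Fin n → ℤ}

/-- Heights sit on the `n + 1` bonds of a line of `n` sites; the spin at site `j` is the increment
between the bonds `j.castSucc` and `j.succ` on either side of it. -/
def IsHeight (y : Fin n → ℤ) (H : Fin (n + 1) → Fin 4) : Prop :=
  ∀ j, (H j.succ : ℤ) - (H j.castSucc : ℤ) = y j

theorem IsHeight.abs_sum_Icc_le {H : Fin (n + 1) → Fin 4} (hH : IsHeight y H) {a b : Fin n}
    (hab : a ≤ b) : |∑ j ∈ Icc a b, y j| ≤ 3 := by
  have hsum : ∑ j ∈ Icc a b, y j = H b.succ - H a.castSucc := by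
    rw [← Fin.sum_Icc_sub hab (fun t => (H t : ℤ))]
    exact sum_congr rfl fun j _ => (hH j).symm
  have := (H b.succ).isLt
  have := (H a.castSucc).isLt
  rw [hsum, abs_le]
  omega

theorem IsHeight.ext {H H' : Fin (n + 1) → Fin 4} (hH : IsHeight y H) (hH' : IsHeight y H')
    (h0 : H 0 = H' 0) : H = H' := by
  funext t
  induction t using Fin.induction with
  | zero => exact h0
  | succ j ih =>
    have := hH j
    have := hH' j
    rw [Fin.ext_iff] at ih ⊢
    omega

theorem abs_partialSum_sub_le (hy : ∀ a b : Fin n, a ≤ b → |∑ j ∈ Icc a b, y j| ≤ 3)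
    (s t : Fin (n + 1)) : |Fin.partialSum y t - Fin.partialSum y s| ≤ 3 := by
  wlog hst : s < t generalizing s t
  · rcases (not_lt.mp hst).eq_or_lt with rfl | hts
    · simp
    · rw [abs_sub_comm]
      exact this t s hts
  obtain ⟨a, rfl⟩ := Fin.exists_castSucc_eq.mpr (Fin.ne_last_of_lt hst)
  obtain ⟨b, rfl⟩ := Fin.exists_succ_eq.mpr (Fin.ne_zero_of_lt hst)
  have hab : a ≤ b := Fin.castSucc_lt_succ_iff.mp hst
  rw [← Fin.sum_Icc_sub hab]
  simpa only [Fin.partialSum_succ, add_sub_cancel_left] using hy a b hab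

theorem exists_isHeight (hy : ∀ a b : Fin n, a ≤ b → |∑ j ∈ Icc a b, y j| ≤ 3) :
    ∃ H, IsHeight y H := by
  set P := Fin.partialSum y
  obtain ⟨s, hs⟩ := Finite.exists_min P
  have hP : ∀ t, 0 ≤ P t - P s ∧ P t - P s ≤ 3 := fun t =>
    ⟨sub_nonneg.mpr (hs t), (abs_le.mp (abs_partialSum_sub_le hy s t)).2⟩
  refine ⟨fun t => ⟨(P t - P s).toNat, by have := hP t; omega⟩, fun j => ?_⟩
  have := hP j.succ
  have := hP j.castSucc
  simp only [P, Fin.partialSum_succ] at *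
  omega

end Height

variable {N : ℕ}

abbrev Charge3Config (N : ℕ) := {x : Fin N × Fin N → ℤ // IsSpinConfig N x ∧ Charge3 N x}

abbrev QChargeConfig (N : ℕ) :=
  {p : (Fin N × Fin (N + 1) → Fin 4) × (Fin (N + 1) × Fin N → Fin 4) // QValid N p.1 p.2}

theorem qValid_of_isHeight {x : Fin N × Fin N → ℤ} {h : Fin N × Fin (N + 1) → Fin 4}
    {v : Fin (N + 1) × Fin N → Fin 4} (hx : IsSpinConfig N x)
    (hh : ∀ i, IsHeight (fun j => x (i, j)) (fun j => h (i, j)))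
    (hv : ∀ j, IsHeight (fun i => x (i, j)) (fun i => v (i, j))) : QValid N h v :=
  fun i j => ⟨x (i, j), hx (i, j), hh i j, hv j i⟩

noncomputable def rowHeights (x : Charge3Config N) : Fin N × Fin (N + 1) → Fin 4 :=
  fun p => (exists_isHeight (x.2.2.1 p.1)).choose p.2

noncomputable def colHeights (x : Charge3Config N) : Fin (N + 1) × Fin N → Fin 4 :=
  fun p => (exists_isHeight (x.2.2.2 p.2)).choose p.1

theorem isHeight_rowHeights (x : Charge3Config N) (i : Fin N) :
    IsHeight (fun j => x.1 (i, j)) (fun j => rowHeights x (i, j)) :=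
  (exists_isHeight (x.2.2.1 i)).choose_spec

theorem isHeight_colHeights (x : Charge3Config N) (j : Fin N) :
    IsHeight (fun i => x.1 (i, j)) (fun i => colHeights x (i, j)) :=
  (exists_isHeight (x.2.2.2 j)).choose_spec

noncomputable def toQCharge (x : Charge3Config N) : QChargeConfig N :=
  ⟨(rowHeights x, colHeights x),
    qValid_of_isHeight x.2.1 (isHeight_rowHeights x) (isHeight_colHeights x)⟩

theorem toQCharge_injective : Function.Injective (toQCharge (N := N)) := by
  intro x x' hxx'
  have hrow : rowHeights x = rowHeights x' := congrArg (fun p => p.1.1) hxx'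
  exact Subtype.ext <| funext fun ⟨i, j⟩ =>
    (isHeight_rowHeights x i j).symm.trans (hrow ▸ isHeight_rowHeights x' i j)

instance : Finite (Charge3Config N) := Finite.of_injective _ toQCharge_injective

theorem Zc3_le_ZQ (N : ℕ) : Zc3 N ≤ ZQ N :=
  Nat.card_le_card_of_injective _ toQCharge_injective

def horizontalSpins (h : Fin N × Fin (N + 1) → Fin 4) (p : Fin N × Fin N) : ℤ :=
  (h (p.1, p.2.succ) : ℤ) - (h (p.1, p.2.castSucc) : ℤ)

theorem isHeight_horizontalSpins (h : Fin N × Fin (N + 1) → Fin 4) (i : Fin N) :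
    IsHeight (fun j => horizontalSpins h (i, j)) (fun j => h (i, j)) :=
  fun _ => rfl

namespace QValid

variable {h : Fin N × Fin (N + 1) → Fin 4} {v : Fin (N + 1) × Fin N → Fin 4}

theorem isSpinConfig (hq : QValid N h v) : IsSpinConfig N (horizontalSpins h) := by
  rintro ⟨i, j⟩
  obtain ⟨s, hs, hh, -⟩ := hq i j
  rwa [← hh] at hs

theorem isHeight_col (hq : QValid N h v) (j : Fin N) :
    IsHeight (fun i => horizontalSpins h (i, j)) (fun i => v (i, j)) := fun i => by
  obtain ⟨s, -, hh, hv⟩ := hq i j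
  exact hv.trans hh.symm

theorem charge3 (hq : QValid N h v) : Charge3 N (horizontalSpins h) :=
  ⟨fun i _ _ => (isHeight_horizontalSpins h i).abs_sum_Icc_le,
    fun j _ _ => (hq.isHeight_col j).abs_sum_Icc_le⟩

end QValid

def toCharge3 (p : QChargeConfig N) : Charge3Config N × (Fin N → Fin 4) × (Fin N → Fin 4) :=
  (⟨horizontalSpins p.1.1, p.2.isSpinConfig, p.2.charge3⟩, fun i => p.1.1 (i, 0),
    fun j => p.1.2 (0, j))

theorem toCharge3_injective : Function.Injective (toCharge3 (N := N)) := by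
  rintro ⟨⟨h, v⟩, hq⟩ ⟨⟨h', v'⟩, hq'⟩ heq
  simp only [toCharge3, Prod.mk.injEq, Subtype.mk.injEq] at heq
  obtain ⟨hx, hh0, hv0⟩ := heq
  have hh : h = h' := funext fun ⟨i, j⟩ => congrFun ((isHeight_horizontalSpins h i).ext
    (hx ▸ isHeight_horizontalSpins h' i) (congrFun hh0 i)) j
  have hv : v = v' := funext fun ⟨i, j⟩ => congrFun ((hq.isHeight_col j).ext
    (hx ▸ hq'.isHeight_col j) (congrFun hv0 j)) i
  subst hh hv
  rfl

theorem ZQ_le_pow_mul_Zc3 (N : ℕ) : ZQ N ≤ 4 ^ (2 * N) * Zc3 N :=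
  calc ZQ N ≤ Nat.card (Charge3Config N × (Fin N → Fin 4) × (Fin N → Fin 4)) :=
        Nat.card_le_card_of_injective _ toCharge3_injective
    _ = 4 ^ (2 * N) * Zc3 N := by
        simp only [Zc3, Nat.card_prod, Nat.card_fun, Nat.card_fin]
        ring

theorem ZQ_le_pow (N : ℕ) : ZQ N ≤ 256 ^ (N ^ 2) := by
  calc ZQ N ≤ Nat.card ((Fin N × Fin (N + 1) → Fin 4) × (Fin (N + 1) × Fin N → Fin 4)) :=
        Finite.card_subtype_le _
    _ = 4 ^ (2 * N * (N + 1)) := by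
        simp only [Nat.card_prod, Nat.card_fun, Nat.card_fin]
        ring
    _ ≤ 4 ^ (4 * N ^ 2) := Nat.pow_le_pow_right (by norm_num) (by nlinarith)
    _ = 256 ^ (N ^ 2) := by rw [pow_mul]; norm_num

theorem limsup_eq_of_le_of_le_mul {α : Type*} {l : Filter α} [NeBot l] {u w c : α → ℝ}
    (hu : 0 ≤ u) (hw : IsBoundedUnder (· ≤ ·) l w) (huw : u ≤ᶠ[l] w) (hwu : w ≤ᶠ[l] c * u)
    (hc : Tendsto c l (𝓝 1)) : limsup u l = limsup w l := by
  have hu_bdd : IsBoundedUnder (· ≤ ·) l u := hw.mono_le huw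
  have hc_bdd : IsBoundedUnder (· ≤ ·) l c := hc.isBoundedUnder_le
  have hc_nonneg : ∃ᶠ x in l, 0 ≤ c x :=
    (hc.eventually (eventually_ge_nhds zero_lt_one)).frequently
  have hw_nonneg : ∀ᶠ x in l, 0 ≤ w x := huw.mono fun x hx => (hu x).trans hx
  refine le_antisymm (limsup_le_limsup huw (isCoboundedUnder_le_of_le l hu) hw) ?_
  calc limsup w l
      ≤ limsup (c * u) l :=
        limsup_le_limsup hwu (isCoboundedUnder_le_of_eventually_le l hw_nonneg)
          (isBoundedUnder_le_mul_of_nonneg hc_nonneg hc_bdd (Eventually.of_forall hu) hu_bdd)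
    _ ≤ limsup c l * limsup u l :=
        limsup_mul_le hc_nonneg hc_bdd (Eventually.of_forall hu) hu_bdd
    _ = limsup u l := by rw [hc.limsup_eq, one_mul]

noncomputable def growthRate (a : ℕ → ℕ) : ℝ :=
  limsup (fun N : ℕ => (a N : ℝ) ^ (1 / (N : ℝ) ^ 2)) atTop

theorem growthRate_eq_of_le_of_le_pow_mul {a b : ℕ → ℕ} {C K : ℕ} (hC : 0 < C)
    (hab : ∀ N, a N ≤ b N) (hba : ∀ N, b N ≤ C ^ N * a N) (hb : ∀ N, b N ≤ K ^ (N ^ 2)) :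
    growthRate a = growthRate b := by
  have he : ∀ N : ℕ, 0 ≤ 1 / (N : ℝ) ^ 2 := fun N => by positivity
  refine limsup_eq_of_le_of_le_mul (c := fun N : ℕ => (C : ℝ) ^ (1 / (N : ℝ)))
    (fun N => by positivity) ?_ (Eventually.of_forall fun N => ?_) ?_ ?_
  · refine isBoundedUnder_of_eventually_le (a := (K : ℝ)) ?_
    filter_upwards [eventually_ne_atTop 0] with N hN
    calc (b N : ℝ) ^ (1 / (N : ℝ) ^ 2)
        ≤ ((K : ℝ) ^ (N ^ 2)) ^ (((N ^ 2 : ℕ) : ℝ)⁻¹) := by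
          rw [Nat.cast_pow, ← one_div]
          exact Real.rpow_le_rpow (by positivity) (by exact_mod_cast hb N) (he N)
      _ = K := Real.pow_rpow_inv_natCast (by positivity) (by positivity)
  · exact Real.rpow_le_rpow (Nat.cast_nonneg _) (by exact_mod_cast hab N) (he N)
  · filter_upwards [eventually_ne_atTop 0] with N hN
    calc (b N : ℝ) ^ (1 / (N : ℝ) ^ 2)
        ≤ ((C : ℝ) ^ N * a N) ^ (1 / (N : ℝ) ^ 2) :=
          Real.rpow_le_rpow (by positivity) (by exact_mod_cast hba N) (he N)
      _ = (C : ℝ) ^ (1 / (N : ℝ)) * (a N : ℝ) ^ (1 / (N : ℝ) ^ 2) := by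
          rw [Real.mul_rpow (by positivity) (by positivity), ← Real.rpow_natCast,
            ← Real.rpow_mul (by positivity)]
          field_simp
  · simpa using tendsto_const_nhds.rpow (tendsto_const_div_atTop_nhds_zero_nat 1)
      (Or.inl (Nat.cast_ne_zero.mpr hC.ne'))

/-- For every `N ≥ 1`, `Zc3(N) ≤ ZQ(N) ≤ 4^(2N) · Zc3(N)`; consequently the
growth rates (as `limsup`s) of the charge(3) and `Q`-charge models are equal. -/
theorem charge3_Qcharge_growth_rates_equal :
    (∀ N : ℕ, 1 ≤ N → Zc3 N ≤ ZQ N ∧ ZQ N ≤ 4 ^ (2 * N) * Zc3 N) ∧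
    limsup (fun N : ℕ => (Zc3 N : ℝ) ^ (1 / (N : ℝ) ^ 2)) atTop =
      limsup (fun N : ℕ => (ZQ N : ℝ) ^ (1 / (N : ℝ) ^ 2)) atTop := by
  refine ⟨fun N _ => ⟨Zc3_le_ZQ N, ZQ_le_pow_mul_Zc3 N⟩, ?_⟩
  refine growthRate_eq_of_le_of_le_pow_mul (C := 16) (by norm_num) Zc3_le_ZQ (fun N => ?_)
    ZQ_le_pow
  simpa only [pow_mul, Nat.reducePow] using ZQ_le_pow_mul_Zc3 N
end

section
/- For every N ≥ 1, Zeven(N) ≤ Zpi(N) ≤ 2^(2N) · Zeven(N). Consequently limsup_{N→∞} (Zeven(N))^(1/N²) = limsup_{N→∞} (Zpi(N))^(1/N²), i.e. the growth rate of the even model equals that of the p-i model. -/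
open Filter

/-- The even constraint: any two `⊖` spins (`false`) in the same row or column
with only `⊕` spins (`true`) strictly between them are separated by an even
number of `⊕` spins. -/
def EvenConstraint (N : ℕ) (x : Fin N × Fin N → Bool) : Prop :=
  (∀ i a b : Fin N, a < b → x (i, a) = false → x (i, b) = false →
      (∀ c : Fin N, a < c → c < b → x (i, c) = true) → Even ((b : ℕ) - a - 1)) ∧
  (∀ j a b : Fin N, a < b → x (a, j) = false → x (b, j) = false →
      (∀ c : Fin N, a < c → c < b → x (c, j) = true) → Even ((b : ℕ) - a - 1))

/-- The number of configurations on the `N × N` grid satisfying the even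
constraint. -/
noncomputable def Zeven (N : ℕ) : ℕ :=
  Nat.card {x : Fin N × Fin N → Bool // EvenConstraint N x}

/-- The `p`-`i` constraint on bond states (`true` = state `i`, `false` = state
`p`): around every vertex, either all four incident bond states are `p`, or
exactly two of them are `i`, one horizontal and one vertical. -/
def PiValid (N : ℕ) (h : Fin N × Fin (N + 1) → Bool)
    (v : Fin (N + 1) × Fin N → Bool) : Prop :=
  ∀ i j : Fin N,
    (h (i, j.castSucc) = false ∧ h (i, j.succ) = false ∧
      v (i.castSucc, j) = false ∧ v (i.succ, j) = false) ∨
    (h (i, j.castSucc) ≠ h (i, j.succ) ∧ v (i.castSucc, j) ≠ v (i.succ, j))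

/-- The number of `p`-`i` configurations on the `N × N` grid. -/
noncomputable def Zpi (N : ℕ) : ℕ :=
  Nat.card {p : (Fin N × Fin (N + 1) → Bool) × (Fin (N + 1) × Fin N → Bool) //
    PiValid N p.1 p.2}

/-!
Cut a `p`-`i` configuration along a row or column: at a `⊖` site both bonds are `p`, at a `⊕`
site the two bonds differ. On such a line every bond equals the first bond xor the parity of the
number of `⊕` sites to its left, so compatible bonds exist iff all `⊖` sites see the same parity,
which is exactly the even constraint on the line; they are then unique given the first bond, and
the spins are read off the bonds. Hence even configurations inject into `p`-`i` configurations,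
and a `p`-`i` configuration is determined by its spins and its `2N` boundary bonds on the left and
top. The growth rates agree because `(2 ^ (2N)) ^ (1 / N²) = 2 ^ (2 / N) → 1`.
-/

open Finset Topology

lemma Nat.bodd_eq_false_iff_even (d : ℕ) : d.bodd = false ↔ Even d := by
  rw [Nat.even_iff, Nat.mod_two_of_bodd]
  cases d.bodd <;> simp

namespace Line

variable {n : ℕ}

-- `EvenConstraint N x` says that every row and every column of `x` has `EvenGaps`.
def EvenGaps (w : Fin n → Bool) : Prop :=
  ∀ a b : Fin n, a < b → w a = false → w b = false →
    (∀ c : Fin n, a < c → c < b → w c = true) → Even ((b : ℕ) - a - 1)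

-- Bond `j.castSucc` lies left of site `j` and bond `j.succ` right of it.
def Compatible (w : Fin n → Bool) (b : Fin (n + 1) → Bool) : Prop :=
  ∀ j, if w j then b j.castSucc ≠ b j.succ else b j.castSucc = false ∧ b j.succ = false

def plusCount (w : Fin n → Bool) (k : ℕ) : ℕ := #{c : Fin n | (c : ℕ) < k ∧ w c}

variable {w : Fin n → Bool} {b b' : Fin (n + 1) → Bool}

@[simp]
lemma plusCount_zero (w : Fin n → Bool) : plusCount w 0 = 0 := by
  simp [plusCount]

lemma plusCount_add (w : Fin n → Bool) {k m : ℕ} (hkm : k ≤ m) :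
    plusCount w m = plusCount w k + #{c : Fin n | k ≤ (c : ℕ) ∧ (c : ℕ) < m ∧ w c} := by
  rw [plusCount, plusCount, ← card_union_of_disjoint (disjoint_filter.2 fun c _ h h' => by omega)]
  congr 1
  ext c
  simp only [mem_filter, mem_union, mem_univ, true_and]
  cases w c <;> simp; omega

lemma bodd_plusCount_succ (w : Fin n → Bool) (j : Fin n) :
    (plusCount w (j + 1)).bodd = xor (plusCount w j).bodd (w j) := by
  have hj : #{c : Fin n | (j : ℕ) ≤ c ∧ (c : ℕ) < j + 1 ∧ w c} = #{c | c = j ∧ w c} := by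
    congr 1
    ext c
    simp only [mem_filter, mem_univ, true_and, ← Fin.val_inj]
    cases w c <;> simp; omega
  rw [plusCount_add w (Nat.le_add_right _ 1), hj, ← filter_filter, filter_eq',
    if_pos (mem_univ j), filter_singleton, Nat.bodd_add]
  cases w j <;> simp

lemma plusCount_eq_add_gap {a b : Fin n} (hab : a < b) (ha : w a = false)
    (hplus : ∀ c, a < c → c < b → w c = true) :
    plusCount w b = plusCount w a + ((b : ℕ) - a - 1) := by
  have hgap : #{c : Fin n | (a : ℕ) ≤ c ∧ (c : ℕ) < b ∧ w c} = #(Ioo a b) := by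
    congr 1
    ext c
    simp only [mem_filter, mem_univ, true_and, mem_Ioo]
    constructor
    · rintro ⟨hac, hcb, hc⟩
      refine ⟨lt_of_le_of_ne (Fin.le_def.2 hac) ?_, hcb⟩
      rintro rfl
      simp [ha] at hc
    · rintro ⟨hac, hcb⟩
      exact ⟨hac.le, hcb, hplus c hac hcb⟩
  rw [plusCount_add w (Fin.le_def.1 hab.le), hgap, Fin.card_Ioo]

lemma EvenGaps.bodd_plusCount_eq (hw : EvenGaps w) {a b : Fin n} (ha : w a = false)
    (hb : w b = false) : (plusCount w a).bodd = (plusCount w b).bodd := by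
  wlog hab : a ≤ b generalizing a b
  · exact (this hb ha (le_of_not_ge hab)).symm
  induction hd : (b : ℕ) - a using Nat.strong_induction_on generalizing a b with
  | _ d ih =>
    rcases eq_or_lt_of_le hab with rfl | hab
    · rfl
    by_cases hmid : ∃ c, a < c ∧ c < b ∧ w c = false
    · obtain ⟨c, hac, hcb, hc⟩ := hmid
      rw [ih _ (by omega) ha hc hac.le rfl, ih _ (by omega) hc hb hcb.le rfl]
    · push Not at hmid
      have hplus : ∀ c, a < c → c < b → w c = true := fun c hac hcb => by
        simpa using hmid c hac hcb
      rw [plusCount_eq_add_gap hab ha hplus, Nat.bodd_add,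
        (Nat.bodd_eq_false_iff_even _).2 (hw a b hab ha hb hplus), Bool.xor_false]

lemma evenGaps_iff :
    EvenGaps w ↔ ∀ a b, w a = false → w b = false →
      (plusCount w a).bodd = (plusCount w b).bodd := by
  refine ⟨fun hw a b => hw.bodd_plusCount_eq, fun hw a b hab ha hb hplus => ?_⟩
  have h := hw a b ha hb
  rw [plusCount_eq_add_gap hab ha hplus, Nat.bodd_add] at h
  rw [← Nat.bodd_eq_false_iff_even]
  simpa using (congrArg (xor (plusCount w a).bodd) h).symm

lemma compatible_iff_step :
    Compatible w b ↔ (∀ j, b j.succ = xor (b j.castSucc) (w j)) ∧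
      ∀ j, w j = false → b j.castSucc = false := by
  have site : ∀ s l r : Bool, (if s then l ≠ r else l = false ∧ r = false) ↔
      r = xor l s ∧ (s = false → l = false) := by decide
  simp only [Compatible, site, forall_and]

lemma step_iff_eq_xor_bodd :
    (∀ j, b j.succ = xor (b j.castSucc) (w j)) ↔
      ∀ k : Fin (n + 1), b k = xor (b 0) (plusCount w k).bodd := by
  constructor
  · intro hstep k
    induction k using Fin.induction with
    | zero => simp
    | succ j ih =>
      rw [hstep, ih, Fin.val_succ, bodd_plusCount_succ, Fin.val_castSucc, Bool.xor_assoc]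
  · intro hb j
    rw [hb, hb j.castSucc, Fin.val_succ, Fin.val_castSucc, bodd_plusCount_succ, Bool.xor_assoc]

lemma compatible_iff :
    Compatible w b ↔ (∀ k : Fin (n + 1), b k = xor (b 0) (plusCount w k).bodd) ∧
      ∀ j, w j = false → (plusCount w j).bodd = b 0 := by
  rw [compatible_iff_step, step_iff_eq_xor_bodd]
  refine and_congr_right fun hb => forall_congr' fun j => imp_congr_right fun _ => ?_
  rw [hb j.castSucc, Fin.val_castSucc]
  cases b 0 <;> simp

lemma Compatible.evenGaps (h : Compatible w b) : EvenGaps w := by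
  obtain ⟨-, hminus⟩ := compatible_iff.1 h
  exact evenGaps_iff.2 fun a c ha hc => (hminus a ha).trans (hminus c hc).symm

lemma EvenGaps.exists_compatible (hw : EvenGaps w) : ∃ b, Compatible w b := by
  obtain ⟨s, hs⟩ : ∃ s, ∀ a, w a = false → (plusCount w a).bodd = s := by
    by_cases hminus : ∃ a, w a = false
    · obtain ⟨a, ha⟩ := hminus
      exact ⟨_, fun c hc => hw.bodd_plusCount_eq hc ha⟩
    · push Not at hminus
      exact ⟨false, fun a ha => absurd ha (by simp [hminus a])⟩
  exact ⟨fun k => xor s (plusCount w k).bodd,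
    compatible_iff.2 ⟨fun k => by simp, by simpa using hs⟩⟩

lemma Compatible.spin_eq (h : Compatible w b) (j : Fin n) :
    w j = xor (b j.castSucc) (b j.succ) := by
  rw [(compatible_iff_step.1 h).1 j, ← Bool.xor_assoc, Bool.xor_self, Bool.false_xor]

lemma Compatible.eq_of_zero (h : Compatible w b) (h' : Compatible w b') (h0 : b 0 = b' 0) :
    b = b' := by
  funext k
  rw [(compatible_iff.1 h).1 k, (compatible_iff.1 h').1 k, h0]

end Line

open Line

def IsBondConfig {N : ℕ} (x : Fin N × Fin N → Bool) (h : Fin N × Fin (N + 1) → Bool)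
    (v : Fin (N + 1) × Fin N → Bool) : Prop :=
  (∀ i, Compatible (fun j => x (i, j)) fun j => h (i, j)) ∧
    ∀ j, Compatible (fun i => x (i, j)) fun i => v (i, j)

section BondConfig

variable {N : ℕ} {x x' : Fin N × Fin N → Bool} {h h' : Fin N × Fin (N + 1) → Bool}
  {v v' : Fin (N + 1) × Fin N → Bool}

lemma piValid_iff_exists_isBondConfig : PiValid N h v ↔ ∃ x, IsBondConfig x h v := by
  have vertex : ∀ hl hr vl vr : Bool,
      ((hl = false ∧ hr = false ∧ vl = false ∧ vr = false) ∨ (hl ≠ hr ∧ vl ≠ vr)) ↔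
        ∃ s : Bool, (if s then hl ≠ hr else hl = false ∧ hr = false) ∧
          (if s then vl ≠ vr else vl = false ∧ vr = false) := by decide
  have bond : ∀ x, IsBondConfig x h v ↔ ∀ i j,
      (if x (i, j) then h (i, j.castSucc) ≠ h (i, j.succ)
        else h (i, j.castSucc) = false ∧ h (i, j.succ) = false) ∧
      (if x (i, j) then v (i.castSucc, j) ≠ v (i.succ, j)
        else v (i.castSucc, j) = false ∧ v (i.succ, j) = false) := by
    intro x
    simp only [IsBondConfig, Compatible, forall_and]
    exact and_congr_right fun _ => forall_comm
  simp only [bond, PiValid, vertex]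
  constructor
  · intro H
    choose x hx using H
    exact ⟨fun p => x p.1 p.2, hx⟩
  · rintro ⟨x, hx⟩ i j
    exact ⟨_, hx i j⟩

lemma IsBondConfig.evenConstraint (hx : IsBondConfig x h v) : EvenConstraint N x :=
  ⟨fun i => (hx.1 i).evenGaps, fun j => (hx.2 j).evenGaps⟩

lemma EvenConstraint.exists_isBondConfig (hx : EvenConstraint N x) :
    ∃ h v, IsBondConfig x h v := by
  choose hrow hhrow using fun i => EvenGaps.exists_compatible (hx.1 i)
  choose vcol hvcol using fun j => EvenGaps.exists_compatible (hx.2 j)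
  exact ⟨fun p => hrow p.1 p.2, fun p => vcol p.2 p.1, hhrow, hvcol⟩

lemma IsBondConfig.spins_eq (hx : IsBondConfig x h v) (hx' : IsBondConfig x' h v') : x = x' := by
  funext ⟨i, j⟩
  exact ((hx.1 i).spin_eq j).trans ((hx'.1 i).spin_eq j).symm

lemma IsBondConfig.bonds_eq (hx : IsBondConfig x h v) (hx' : IsBondConfig x h' v')
    (hh : ∀ i, h (i, 0) = h' (i, 0)) (hv : ∀ j, v (0, j) = v' (0, j)) : h = h' ∧ v = v' := by
  constructor
  · funext ⟨i, j⟩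
    exact congrFun ((hx.1 i).eq_of_zero (hx'.1 i) (hh i)) j
  · funext ⟨i, j⟩
    exact congrFun ((hx.2 j).eq_of_zero (hx'.2 j) (hv j)) i

end BondConfig

lemma zeven_le_zpi (N : ℕ) : Zeven N ≤ Zpi N := by
  choose h v hx using fun x : {x // EvenConstraint N x} => x.2.exists_isBondConfig
  refine Nat.card_le_card_of_injective
    (fun x => ⟨(h x, v x), piValid_iff_exists_isBondConfig.2 ⟨x, hx x⟩⟩) fun x x' hxx' => ?_
  simp only [Subtype.mk.injEq, Prod.mk.injEq] at hxx'
  exact Subtype.ext ((hx x).spins_eq (hxx'.1 ▸ hx x'))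

lemma zpi_le_two_pow_mul_zeven (N : ℕ) : Zpi N ≤ 2 ^ (2 * N) * Zeven N := by
  choose x hx using fun p : {p : (Fin N × Fin (N + 1) → Bool) × (Fin (N + 1) × Fin N → Bool) //
    PiValid N p.1 p.2} => piValid_iff_exists_isBondConfig.1 p.2
  let boundaryAndSpins (p : {p : (Fin N × Fin (N + 1) → Bool) × (Fin (N + 1) × Fin N → Bool) //
      PiValid N p.1 p.2}) : (Fin N → Bool) × (Fin N → Bool) × {x // EvenConstraint N x} :=
    (fun i => p.1.1 (i, 0), fun j => p.1.2 (0, j), ⟨x p, (hx p).evenConstraint⟩)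
  have hinj : Function.Injective boundaryAndSpins := by
    intro p p' hpp'
    simp only [boundaryAndSpins, Prod.mk.injEq, Subtype.mk.injEq] at hpp'
    obtain ⟨hh, hv, hxx⟩ := hpp'
    obtain ⟨hh, hv⟩ := (hx p).bonds_eq (hxx ▸ hx p') (congrFun hh) (congrFun hv)
    exact Subtype.ext (Prod.ext hh hv)
  calc Zpi N ≤ Nat.card ((Fin N → Bool) × (Fin N → Bool) × {x // EvenConstraint N x}) :=
        Nat.card_le_card_of_injective _ hinj
    _ = 2 ^ (2 * N) * Zeven N := by simp [Nat.card_prod, Zeven, two_mul, pow_add, mul_assoc]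

lemma zeven_le_two_pow (N : ℕ) : Zeven N ≤ 2 ^ (N * N) := by
  simpa [Zeven] using Nat.card_le_card_of_injective _ (Subtype.val_injective (p := EvenConstraint N))

lemma limsup_eq_of_le_of_le_mul_s5 {ι : Type*} {l : Filter ι} [l.NeBot] {u v c : ι → ℝ}
    (hu0 : 0 ≤ᶠ[l] u) (hu : IsBoundedUnder (· ≤ ·) l u) (huv : u ≤ᶠ[l] v)
    (hvu : v ≤ᶠ[l] c * u) (hc : Tendsto c l (𝓝 1)) : limsup u l = limsup v l := by
  have hc0 : 0 ≤ᶠ[l] c := hc.eventually (eventually_ge_nhds zero_lt_one)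
  have hcu : IsBoundedUnder (· ≤ ·) l (c * u) :=
    isBoundedUnder_le_mul_of_nonneg hc0.frequently hc.isBoundedUnder_le hu0 hu
  have hv : IsBoundedUnder (· ≤ ·) l v := hcu.mono_le hvu
  have hv0 : 0 ≤ᶠ[l] v := hu0.trans huv
  apply le_antisymm (limsup_le_limsup huv (IsCoboundedUnder.of_frequently_ge hu0.frequently) hv)
  calc limsup v l ≤ limsup (c * u) l :=
        limsup_le_limsup hvu (IsCoboundedUnder.of_frequently_ge hv0.frequently) hcu
    _ ≤ limsup c l * limsup u l := limsup_mul_le hc0.frequently hc.isBoundedUnder_le hu0 hu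
    _ = limsup u l := by rw [hc.limsup_eq, one_mul]

lemma natCast_two_pow_rpow_one_div_sq (k : ℕ) {N : ℕ} (hN : N ≠ 0) :
    ((2 ^ k : ℕ) : ℝ) ^ (1 / (N : ℝ) ^ 2) = 2 ^ ((k : ℝ) / N ^ 2) := by
  rw [Nat.cast_pow, Nat.cast_ofNat, ← Real.rpow_natCast, ← Real.rpow_mul zero_le_two]
  congr 1
  field_simp

lemma limsup_rpow_one_div_sq_eq {a b : ℕ → ℕ} (hab : ∀ N, a N ≤ b N)
    (hba : ∀ N, b N ≤ 2 ^ (2 * N) * a N) (ha : ∀ N, a N ≤ 2 ^ (N * N)) :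
    limsup (fun N : ℕ => (a N : ℝ) ^ (1 / (N : ℝ) ^ 2)) atTop =
      limsup (fun N : ℕ => (b N : ℝ) ^ (1 / (N : ℝ) ^ 2)) atTop := by
  have rpow_mono {m k : ℕ} (hmk : m ≤ k) (N : ℕ) :
      (m : ℝ) ^ (1 / (N : ℝ) ^ 2) ≤ (k : ℝ) ^ (1 / (N : ℝ) ^ 2) :=
    Real.rpow_le_rpow (Nat.cast_nonneg _) (Nat.cast_le.2 hmk) (by positivity)
  refine limsup_eq_of_le_of_le_mul_s5 (c := fun N : ℕ => ((2 ^ (2 * N) : ℕ) : ℝ) ^ (1 / (N : ℝ) ^ 2))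
    (.of_forall fun N => Real.rpow_nonneg (Nat.cast_nonneg _) _) ?_
    (.of_forall fun N => rpow_mono (hab N) N) (.of_forall fun N => ?_) ?_
  · refine isBoundedUnder_of_eventually_le (a := 2) ?_
    filter_upwards [eventually_ne_atTop 0] with N hN
    calc _ ≤ _ := rpow_mono (ha N) N
      _ = 2 := by
        rw [natCast_two_pow_rpow_one_div_sq _ hN, Nat.cast_mul, ← sq,
          div_self (by positivity), Real.rpow_one]
  · calc _ ≤ _ := rpow_mono (hba N) N
      _ = _ := by rw [Nat.cast_mul, Real.mul_rpow (Nat.cast_nonneg _) (Nat.cast_nonneg _)]; rfl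
  · have h : Tendsto (fun N : ℕ => (2 : ℝ) ^ (2 / (N : ℝ))) atTop (𝓝 1) := by
      simpa [Function.comp_def] using (Real.continuousAt_const_rpow two_ne_zero).tendsto.comp
        (tendsto_const_div_atTop_nhds_zero_nat 2)
    refine h.congr' ?_
    filter_upwards [eventually_ne_atTop 0] with N hN
    rw [natCast_two_pow_rpow_one_div_sq _ hN]
    congr 1
    push_cast
    field_simp

/-- For every `N ≥ 1`, `Zeven(N) ≤ Zpi(N) ≤ 2^(2N) · Zeven(N)`; consequently
the growth rates (as `limsup`s) of the even and `p`-`i` models are equal. -/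
theorem even_pi_growth_rates_equal :
    (∀ N : ℕ, 1 ≤ N → Zeven N ≤ Zpi N ∧ Zpi N ≤ 2 ^ (2 * N) * Zeven N) ∧
    limsup (fun N : ℕ => (Zeven N : ℝ) ^ (1 / (N : ℝ) ^ 2)) atTop =
      limsup (fun N : ℕ => (Zpi N : ℝ) ^ (1 / (N : ℝ) ^ 2)) atTop :=
  ⟨fun N _ => ⟨zeven_le_zpi N, zpi_le_two_pow_mul_zeven N⟩,
    limsup_rpow_one_div_sq_eq zeven_le_zpi zpi_le_two_pow_mul_zeven zeven_le_two_pow⟩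
end

section
/- For every N ≥ 1, the number of even-face configurations on the (N+1)×(N+1) array of faces is exactly twice the number of p-i configurations on the N×N grid: Zef(N) = 2 · Zpi(N). The correspondence sends a face configuration f to the bond configuration in which a bond has state i precisely when the two faces it separates carry different states (h(i,j) = (f(i,j) ≠ f(i+1,j)) for horizontal bonds and v(i,j) = (f(i,j) ≠ f(i,j+1)) for vertical bonds), and this map is exactly 2-to-1 from even-face configurations onto valid p-i configurations. -/
/-- The even-face constraint: the four face states around any vertex never
contain exactly two `true`s. -/
def EvenFace (N : ℕ) (f : Fin (N + 1) × Fin (N + 1) → Bool) : Prop :=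
  ∀ i j : Fin N,
    (f (i.castSucc, j.castSucc)).toNat + (f (i.castSucc, j.succ)).toNat +
      (f (i.succ, j.castSucc)).toNat + (f (i.succ, j.succ)).toNat ≠ 2

/-- The number of even-face configurations on the `(N+1) × (N+1)` array of
faces. -/
noncomputable def Zef (N : ℕ) : ℕ :=
  Nat.card {f : Fin (N + 1) × Fin (N + 1) → Bool // EvenFace N f}

/-- The faces-to-bonds map: a bond is in state `i` (`true`) precisely when the
two faces it separates carry different states. -/
def facesToBonds (N : ℕ) (f : Fin (N + 1) × Fin (N + 1) → Bool) :
    (Fin N × Fin (N + 1) → Bool) × (Fin (N + 1) × Fin N → Bool) :=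
  (fun p => f (p.1.castSucc, p.2) != f (p.1.succ, p.2),
   fun p => f (p.1, p.2.castSucc) != f (p.1, p.2.succ))

theorem Nat.card_subtype_eq_mul_of_card_fiber {α β : Type*} [Finite α] [Finite β] (f : α → β)
    {p : α → Prop} {q : β → Prop} (hpq : ∀ x, p x ↔ q (f x)) (k : ℕ)
    (hk : ∀ y, q y → Nat.card {x // f x = y} = k) :
    Nat.card (Subtype p) = k * Nat.card (Subtype q) := by
  have := Fintype.ofFinite (Subtype q)
  calc Nat.card (Subtype p)
      = ∑ y : Subtype q, Nat.card {x // f x = y} :=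
        (Nat.card_congr (Equiv.sigmaSubtypeFiberEquivSubtype f hpq)).symm.trans Nat.card_sigma
    _ = k * Nat.card (Subtype q) := by
        simp [Finset.sum_congr rfl fun (y : Subtype q) _ => hk y y.2, mul_comm]

theorem toNat_sum_ne_two_iff_piVertex (a b c d : Bool) :
    a.toNat + b.toNat + c.toNat + d.toNat ≠ 2 ↔
      ((a != c) = false ∧ (b != d) = false ∧ (a != b) = false ∧ (c != d) = false) ∨
        ((a != c) ≠ (b != d) ∧ (a != b) ≠ (c != d)) := by
  revert a b c d; decide

theorem piValid_facesToBonds_iff {N : ℕ} (f : Fin (N + 1) × Fin (N + 1) → Bool) :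
    PiValid N (facesToBonds N f).1 (facesToBonds N f).2 ↔ EvenFace N f :=
  forall_congr' fun _ => forall_congr' fun _ => (toNat_sum_ne_two_iff_piVertex ..).symm

theorem bne_eq_bne_of_piVertex {a b c d : Bool}
    (h : (a = false ∧ b = false ∧ c = false ∧ d = false) ∨ (a ≠ b ∧ c ≠ d)) :
    (a != b) = (c != d) := by
  revert a b c d; decide

theorem PiValid.bne_horizontal_eq_bne_vertical {N : ℕ} {h : Fin N × Fin (N + 1) → Bool}
    {v : Fin (N + 1) × Fin N → Bool} (hv : PiValid N h v) (i j : Fin N) :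
    (h (i, j.castSucc) != h (i, j.succ)) = (v (i.castSucc, j) != v (i.succ, j)) :=
  bne_eq_bne_of_piVertex (hv i j)

/-- Integrates a bond field from the corner face `(0, 0)`: down column `0` along `h`, then along
each row along `v`. -/
def facesOfBonds {N : ℕ} (h : Fin N × Fin (N + 1) → Bool) (v : Fin (N + 1) × Fin N → Bool)
    (b : Bool) (p : Fin (N + 1) × Fin (N + 1)) : Bool :=
  Fin.induction (motive := fun _ => Bool)
    (Fin.induction (motive := fun _ => Bool) b (fun i acc => acc != h (i, 0)) p.1)
    (fun j acc => acc != v (p.1, j)) p.2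

section facesOfBonds

variable {N : ℕ} (h : Fin N × Fin (N + 1) → Bool) (v : Fin (N + 1) × Fin N → Bool) (b : Bool)

@[simp]
theorem facesOfBonds_zero : facesOfBonds h v b (0, 0) = b := by
  simp [facesOfBonds]

theorem facesOfBonds_succ_zero (i : Fin N) :
    facesOfBonds h v b (i.succ, 0) = (facesOfBonds h v b (i.castSucc, 0) != h (i, 0)) := by
  simp [facesOfBonds]

theorem facesOfBonds_succ (i : Fin (N + 1)) (j : Fin N) :
    facesOfBonds h v b (i, j.succ) = (facesOfBonds h v b (i, j.castSucc) != v (i, j)) := by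
  simp [facesOfBonds]

end facesOfBonds

theorem facesToBonds_facesOfBonds {N : ℕ} {h : Fin N × Fin (N + 1) → Bool}
    {v : Fin (N + 1) × Fin N → Bool} (hv : PiValid N h v) (b : Bool) :
    facesToBonds N (facesOfBonds h v b) = (h, v) := by
  refine Prod.ext (funext fun ⟨i, j⟩ => ?_) (funext fun ⟨i, j⟩ => ?_)
  · induction j using Fin.induction with
    | zero => simp [facesToBonds, facesOfBonds_succ_zero]
    | succ j ih =>
      have hcurl := hv.bne_horizontal_eq_bne_vertical i j
      simp only [facesToBonds, facesOfBonds_succ] at ih ⊢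
      rw [← Bool.bne_right_inj (x := h (i, j.castSucc)), hcurl, ← ih]
      simp only [Bool.bne_assoc, Bool.xor_left_comm (facesOfBonds h v b (i.succ, j.castSucc)),
        Bool.bne_self_left]
  · simp [facesToBonds, facesOfBonds_succ]

theorem eq_of_facesToBonds_eq {N : ℕ} {f f' : Fin (N + 1) × Fin (N + 1) → Bool}
    (hb : facesToBonds N f = facesToBonds N f') (h₀ : f (0, 0) = f' (0, 0)) : f = f' := by
  have hcol : ∀ i, f (i, 0) = f' (i, 0) := by
    intro i
    induction i using Fin.induction with
    | zero => exact h₀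
    | succ i ih =>
      have := congrFun (congrArg Prod.fst hb) (i, 0)
      simp only [facesToBonds, ih] at this
      exact Bool.bne_right_inj.mp this
  funext ⟨i, j⟩
  induction j using Fin.induction with
  | zero => exact hcol i
  | succ j ih =>
    have := congrFun (congrArg Prod.snd hb) (i, j)
    simp only [facesToBonds, ih] at this
    exact Bool.bne_right_inj.mp this

theorem card_facesToBonds_fiber {N : ℕ} {h : Fin N × Fin (N + 1) → Bool}
    {v : Fin (N + 1) × Fin N → Bool} (hv : PiValid N h v) :
    Nat.card {f // facesToBonds N f = (h, v)} = 2 := by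
  let e : {f // facesToBonds N f = (h, v)} ≃ Bool :=
    { toFun := fun f => f.1 (0, 0)
      invFun := fun b => ⟨facesOfBonds h v b, facesToBonds_facesOfBonds hv b⟩
      left_inv := fun ⟨f, hf⟩ => Subtype.ext <| eq_of_facesToBonds_eq
        (by rw [facesToBonds_facesOfBonds hv, hf]) (facesOfBonds_zero h v _)
      right_inv := facesOfBonds_zero h v }
  rw [Nat.card_congr e, Nat.card_eq_fintype_card, Fintype.card_bool]

theorem evenFace_eq_two_mul_pi_general (N : ℕ) :
    (∀ f : Fin (N + 1) × Fin (N + 1) → Bool, EvenFace N f →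
      PiValid N (facesToBonds N f).1 (facesToBonds N f).2) ∧
    (∀ h : Fin N × Fin (N + 1) → Bool, ∀ v : Fin (N + 1) × Fin N → Bool,
      PiValid N h v →
      Nat.card {f : Fin (N + 1) × Fin (N + 1) → Bool //
        EvenFace N f ∧ facesToBonds N f = (h, v)} = 2) ∧
    Zef N = 2 * Zpi N := by
  refine ⟨fun f => (piValid_facesToBonds_iff f).mpr, fun h v hv => ?_,
    Nat.card_subtype_eq_mul_of_card_fiber (facesToBonds N)
      (fun f => (piValid_facesToBonds_iff f).symm) 2 fun _ hv => card_facesToBonds_fiber hv⟩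
  rw [← card_facesToBonds_fiber hv]
  refine Nat.card_congr (Equiv.subtypeEquivRight fun f => ?_)
  exact and_iff_right_of_imp fun hf => (piValid_facesToBonds_iff f).mp (hf ▸ hv)

/-- For every `N ≥ 1`: the faces-to-bonds map sends even-face configurations
to valid `p`-`i` configurations, it is exactly 2-to-1 onto the valid `p`-`i`
configurations, and hence `Zef(N) = 2 · Zpi(N)`. -/
theorem evenFace_eq_two_mul_pi (N : ℕ) (hN : 1 ≤ N) :
    (∀ f : Fin (N + 1) × Fin (N + 1) → Bool, EvenFace N f →
      PiValid N (facesToBonds N f).1 (facesToBonds N f).2) ∧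
    (∀ h : Fin N × Fin (N + 1) → Bool, ∀ v : Fin (N + 1) × Fin N → Bool,
      PiValid N h v →
      Nat.card {f : Fin (N + 1) × Fin (N + 1) → Bool //
        EvenFace N f ∧ facesToBonds N f = (h, v)} = 2) ∧
    Zef N = 2 * Zpi N :=
  evenFace_eq_two_mul_pi_general N
end

section
/- For every n ≥ 0, a_n = 2 · b_n: the number of one-dimensional Q-charge words with n steps is exactly twice the number of one-dimensional p-i words with n steps. (This follows from the 2-to-1 graph homomorphism from the path graph on {0,1,2,3} onto the graph on {p,i} with edges {p,p} and {p,i}, sending 0 and 3 to i and sending 1 and 2 to p.) -/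
/-!
The map `Fin 4 → Bool` sending `0, 3` to `i = true` and `1, 2` to `p = false` is a covering of
the relation `|y - x| = 1` by the relation "not both `i`": it maps the neighbours of `x` bijectively
onto those of `f x`. Walks therefore lift uniquely once their starting point is chosen in the
fibre, and since every fibre has two points there are twice as many `Q`-charge words as `p`-`i`
words.
-/

/-- The number of one-dimensional `Q`-charge words with `n` steps: sequences
`w : Fin (n+1) → Fin 4` whose consecutive entries differ by exactly 1. -/
noncomputable def qChargeWordCount (n : ℕ) : ℕ :=
  Nat.card {w : Fin (n + 1) → Fin 4 //
    ∀ k : Fin n, |((w k.succ : ℤ)) - ((w k.castSucc : ℤ))| = 1}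

/-- The number of one-dimensional `p`-`i` words with `n` steps: sequences
`u : Fin (n+1) → Bool` with no two consecutive entries both `true`. -/
noncomputable def piWordCount (n : ℕ) : ℕ :=
  Nat.card {u : Fin (n + 1) → Bool //
    ∀ k : Fin n, ¬(u k.castSucc = true ∧ u k.succ = true)}

open Finset

variable {α β : Type*}

abbrev RelWalkFrom (r : α → α → Prop) (n : ℕ) (x : α) : Type _ :=
  {w : Fin (n + 1) → α // w 0 = x ∧ ∀ k : Fin n, r (w k.castSucc) (w k.succ)}

namespace RelWalkFrom

variable (r : α → α → Prop)

def consEquiv (n : ℕ) (x : α) :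
    RelWalkFrom r (n + 1) x ≃ Σ y : {y // r x y}, RelWalkFrom r n y where
  toFun w := ⟨⟨w.1 1, by simpa [w.2.1] using w.2.2 0⟩, Fin.tail w.1, rfl, fun k => w.2.2 k.succ⟩
  invFun p := ⟨Fin.cons x p.2.1, rfl,
    Fin.cases (by simpa [p.2.2.1] using p.1.2) fun k => by simpa using p.2.2.2 k⟩
  left_inv w := Subtype.ext (by simp [← w.2.1])
  right_inv p := Sigma.subtype_ext (Subtype.ext p.2.2.1) rfl

def sigmaEquiv (n : ℕ) :
    {w : Fin (n + 1) → α // ∀ k : Fin n, r (w k.castSucc) (w k.succ)} ≃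
      Σ x, RelWalkFrom r n x where
  toFun w := ⟨w.1 0, w.1, rfl, w.2⟩
  invFun p := ⟨p.2.1, p.2.2.2⟩
  left_inv _ := rfl
  right_inv p := Sigma.subtype_ext p.2.2.1 rfl

end RelWalkFrom

structure IsCovering (r : α → α → Prop) (s : β → β → Prop) (f : α → β) : Prop where
  map_rel : ∀ x y, r x y → s (f x) (f y)
  exists_lift : ∀ x b, s (f x) b → ∃ y, r x y ∧ f y = b
  lift_unique : ∀ x y y', r x y → r x y' → f y = f y' → y = y'

namespace IsCovering

variable {r : α → α → Prop} {s : β → β → Prop} {f : α → β}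

noncomputable def neighborEquiv (hf : IsCovering r s f) (x : α) :
    {y // r x y} ≃ {b // s (f x) b} :=
  Equiv.ofBijective (fun y => ⟨f y, hf.map_rel _ _ y.2⟩) ⟨
    fun y y' h => Subtype.ext <| hf.lift_unique _ _ _ y.2 y'.2 (congrArg Subtype.val h),
    fun b => by
      obtain ⟨y, hy, hyb⟩ := hf.exists_lift _ _ b.2
      exact ⟨⟨y, hy⟩, Subtype.ext hyb⟩⟩

noncomputable def liftEquiv (hf : IsCovering r s f) :
    ∀ n x, RelWalkFrom r n x ≃ RelWalkFrom s n (f x)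
  | 0, x => {
      toFun _ := ⟨fun _ => f x, rfl, Fin.elim0⟩
      invFun _ := ⟨fun _ => x, rfl, Fin.elim0⟩
      left_inv w := Subtype.ext <| funext fun i => by rw [Fin.fin_one_eq_zero i, w.2.1]
      right_inv u := Subtype.ext <| funext fun i => by rw [Fin.fin_one_eq_zero i, u.2.1] }
  | n + 1, x => (RelWalkFrom.consEquiv r n x).trans <|
      (Equiv.sigmaCongr (hf.neighborEquiv x) fun y => hf.liftEquiv n y).trans
        (RelWalkFrom.consEquiv s n (f x)).symm

theorem card_walks_eq_mul [Fintype α] [Fintype β] (hf : IsCovering r s f) {k : ℕ}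
    (hk : ∀ b, Nat.card {x // f x = b} = k) (n : ℕ) :
    Nat.card {w : Fin (n + 1) → α // ∀ i : Fin n, r (w i.castSucc) (w i.succ)} =
      k * Nat.card {u : Fin (n + 1) → β // ∀ i : Fin n, s (u i.castSucc) (u i.succ)} := by
  classical
  calc _ = ∑ x, Nat.card (RelWalkFrom r n x) := by
        rw [Nat.card_congr (RelWalkFrom.sigmaEquiv r n), Nat.card_sigma]
    _ = ∑ x, Nat.card (RelWalkFrom s n (f x)) := by
        simp only [Nat.card_congr (hf.liftEquiv n _)]
    _ = ∑ b, ∑ _x : {x // f x = b}, Nat.card (RelWalkFrom s n b) :=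
        (Fintype.sum_fiberwise' f fun b => Nat.card (RelWalkFrom s n b)).symm
    _ = k * ∑ b, Nat.card (RelWalkFrom s n b) := by
        simp only [sum_const, card_univ, ← Nat.card_eq_fintype_card, hk, smul_eq_mul, mul_sum]
    _ = _ := by
        rw [Nat.card_congr (RelWalkFrom.sigmaEquiv s n), Nat.card_sigma]

end IsCovering

def qChargeToPi : Fin 4 → Bool
  | 0 => true
  | 1 => false
  | 2 => false
  | 3 => true

theorem qChargeToPi_isCovering :
    IsCovering (fun x y : Fin 4 => |(y : ℤ) - (x : ℤ)| = 1)
      (fun a b : Bool => ¬(a = true ∧ b = true)) qChargeToPi where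
  map_rel := by decide
  exists_lift := by decide
  lift_unique := by decide

theorem card_qChargeToPi_fiber (b : Bool) : Nat.card {x // qChargeToPi x = b} = 2 := by
  rw [Nat.card_eq_fintype_card]
  revert b
  decide

/-- For every `n ≥ 0`, the number of one-dimensional `Q`-charge words with `n`
steps is exactly twice the number of one-dimensional `p`-`i` words with `n`
steps. -/
theorem qChargeWordCount_eq_two_mul_piWordCount (n : ℕ) :
    qChargeWordCount n = 2 * piWordCount n :=
  qChargeToPi_isCovering.card_walks_eq_mul card_qChargeToPi_fiber n
end

section
/- For the two-dimensional lattice, the growth rate of the charge(3) model is at least that of the even model: limsup_{N→∞} (Zc3(N))^(1/N²) ≥ limsup_{N→∞} (Zeven(N))^(1/N²). -/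
open Filter

/-!
Staggering a configuration, `x(i,j) ↦ (-1)^(i+j) σ(x(i,j))` with `σ(⊕) = 1`, `σ(⊖) = -1`, maps
even configurations injectively to charge(3) configurations, so `Zeven N ≤ Zc3 N ≤ 2^(N²)` and the
limsups compare. Along a line the staggered sum over `[u, v]` is `∑ (-1)^j - 2 ∑_{⊖} (-1)^j`. The
even constraint says exactly that consecutive `⊖` spins sit at positions of opposite parity, so the
second sum alternates just like the first, and an alternating sum of signs lies in `{-1, 0, 1}`.
-/

open Finset

section Alternating

variable {α β : Type*} [LinearOrder α]

def AlternatesOn [Neg β] (s : α → β) (F : Finset α) : Prop :=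
  ∀ p ∈ F, ∀ q ∈ F, p < q → (∀ r ∈ F, r ≤ p ∨ q ≤ r) → s q = -s p

theorem AlternatesOn.sum_eq_zero_or_eq_of_isGreatest [AddCommGroup β] {s : α → β}
    {F : Finset α} (h : AlternatesOn s F) :
    ∑ j ∈ F, s j = 0 ∨ ∃ m, IsGreatest (F : Set α) m ∧ ∑ j ∈ F, s j = s m := by
  induction F using Finset.induction_on_max with
  | empty => simp
  | insert a F ha ih =>
    have haF : a ∉ F := fun haF => lt_irrefl a (ha a haF)
    have hF : AlternatesOn s F := fun p hp q hq hpq hgap =>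
      h p (mem_insert_of_mem hp) q (mem_insert_of_mem hq) hpq fun r hr => by
        rcases mem_insert.mp hr with rfl | hr
        · exact Or.inr (ha q hq).le
        · exact hgap r hr
    have ha_greatest : IsGreatest (↑(insert a F) : Set α) a :=
      ⟨mem_insert_self a F, fun x hx => by
        rcases mem_insert.mp hx with rfl | hx
        exacts [le_rfl, (ha x hx).le]⟩
    rw [sum_insert haF]
    rcases ih hF with h0 | ⟨m, ⟨hmF, hmax⟩, hm⟩
    · exact Or.inr ⟨a, ha_greatest, by rw [h0, add_zero]⟩
    · have hsa : s a = -s m :=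
        h m (mem_insert_of_mem hmF) a (mem_insert_self a F) (ha m hmF) fun r hr => by
          rcases mem_insert.mp hr with rfl | hr
          exacts [Or.inr le_rfl, Or.inl (hmax hr)]
      exact Or.inl (by rw [hm, hsa, neg_add_cancel])

theorem AlternatesOn.abs_sum_le [AddCommGroup β] [LinearOrder β] [IsOrderedAddMonoid β]
    {s : α → β} {F : Finset α} (h : AlternatesOn s F) {c : β} (hc : 0 ≤ c)
    (hs : ∀ j ∈ F, |s j| ≤ c) : |∑ j ∈ F, s j| ≤ c := by
  rcases h.sum_eq_zero_or_eq_of_isGreatest with h0 | ⟨m, ⟨hmF, -⟩, hm⟩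
  · rwa [h0, abs_zero]
  · exact hm ▸ hs m hmF

end Alternating

theorem neg_one_pow_eq_neg_of_even_sub {a b : ℕ} (hab : a < b) (h : Even (b - a - 1)) :
    (-1 : ℤ) ^ b = -(-1) ^ a := by
  obtain ⟨k, hk⟩ := h
  obtain rfl : b = a + (k + k) + 1 := by omega
  rw [pow_succ, pow_add, Even.neg_one_pow ⟨k, rfl⟩, mul_one, mul_neg_one]

section Line

variable {N : ℕ}

def EvenLine (t : Fin N → Bool) : Prop :=
  ∀ a b : Fin N, a < b → t a = false → t b = false →
    (∀ c : Fin N, a < c → c < b → t c = true) → Even ((b : ℕ) - a - 1)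

theorem alternatesOn_Icc (u v : Fin N) :
    AlternatesOn (fun j : Fin N => (-1 : ℤ) ^ (j : ℕ)) (Icc u v) := by
  intro p hp q hq hpq hgap
  refine neg_one_pow_eq_neg_of_even_sub hpq ?_
  suffices (q : ℕ) = p + 1 by simp [this]
  by_contra hne
  have hlt : (p : ℕ) + 1 < q := by omega
  have hr : (⟨p + 1, by omega⟩ : Fin N) ∈ Icc u v := by
    simp only [mem_Icc, Fin.le_def] at hp hq ⊢
    omega
  rcases hgap _ hr with h | h <;> simp only [Fin.le_def] at h <;> omega

theorem EvenLine.alternatesOn_filter {t : Fin N → Bool} (ht : EvenLine t) (u v : Fin N) :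
    AlternatesOn (fun j : Fin N => (-1 : ℤ) ^ (j : ℕ)) ((Icc u v).filter (t · = false)) := by
  intro p hp q hq hpq hgap
  simp only [mem_filter, mem_Icc] at hp hq
  refine neg_one_pow_eq_neg_of_even_sub hpq (ht p q hpq hp.2 hq.2 fun c hpc hcq => ?_)
  by_contra hc
  have hcF : c ∈ (Icc u v).filter (t · = false) := by
    simp only [mem_filter, mem_Icc]
    exact ⟨⟨hp.1.1.trans hpc.le, hcq.le.trans hq.1.2⟩, by simpa using hc⟩
  rcases hgap c hcF with h | h
  exacts [absurd hpc h.not_gt, absurd hcq h.not_gt]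

theorem EvenLine.abs_sum_staggered_le {t : Fin N → Bool} (ht : EvenLine t) (u v : Fin N) :
    |∑ j ∈ Icc u v, (-1 : ℤ) ^ (j : ℕ) * if t j then 1 else -1| ≤ 3 := by
  have hsplit : ∑ j ∈ Icc u v, (-1 : ℤ) ^ (j : ℕ) * (if t j then 1 else -1) =
      ∑ j ∈ Icc u v, (-1 : ℤ) ^ (j : ℕ) -
        2 * ∑ j ∈ (Icc u v).filter (t · = false), (-1 : ℤ) ^ (j : ℕ) := by
    rw [sum_filter, mul_sum, ← sum_sub_distrib]
    refine sum_congr rfl fun j _ => ?_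
    cases t j <;> simp only [Bool.false_eq_true, Bool.true_eq_false, if_true, if_false] <;> ring
  have hsign : ∀ j : Fin N, |(-1 : ℤ) ^ (j : ℕ)| ≤ 1 := fun j => (abs_neg_one_pow _).le
  have hA := (alternatesOn_Icc u v).abs_sum_le zero_le_one fun j _ => hsign j
  have hB := (ht.alternatesOn_filter u v).abs_sum_le zero_le_one fun j _ => hsign j
  rw [hsplit]
  calc _ ≤ |∑ j ∈ Icc u v, (-1 : ℤ) ^ (j : ℕ)| +
          |2 * ∑ j ∈ (Icc u v).filter (t · = false), (-1 : ℤ) ^ (j : ℕ)| := abs_sub _ _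
    _ ≤ 3 := by rw [abs_mul, abs_two]; linarith

end Line

section Staggered

variable {N : ℕ}

def staggered (x : Fin N × Fin N → Bool) : Fin N × Fin N → ℤ :=
  fun p => (-1) ^ ((p.1 : ℕ) + p.2) * if x p then 1 else -1

theorem isSpinConfig_staggered (x : Fin N × Fin N → Bool) : IsSpinConfig N (staggered x) := by
  intro p
  rcases neg_one_pow_eq_or ℤ ((p.1 : ℕ) + p.2) with h | h <;> cases x p <;> simp [staggered, h]

theorem staggered_injective : Function.Injective (staggered (N := N)) := by
  intro x y h
  funext p
  have hp := mul_left_cancel₀ (pow_ne_zero _ (by norm_num)) (congrFun h p)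
  cases hx : x p <;> cases hy : y p <;> simp [hx, hy] at hp ⊢

theorem charge3_staggered {x : Fin N × Fin N → Bool} (hx : EvenConstraint N x) :
    Charge3 N (staggered x) := by
  have hrow : ∀ i j, staggered x (i, j) =
      (-1) ^ (i : ℕ) * ((-1) ^ (j : ℕ) * if x (i, j) then 1 else -1) := by
    intro i j; simp only [staggered, pow_add, mul_assoc]
  have hcol : ∀ i j, staggered x (i, j) =
      (-1) ^ (j : ℕ) * ((-1) ^ (i : ℕ) * if x (i, j) then 1 else -1) := by
    intro i j; rw [hrow]; ring
  constructor
  · intro i a b _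
    simp_rw [hrow, ← mul_sum, abs_mul, abs_neg_one_pow, one_mul]
    exact EvenLine.abs_sum_staggered_le (hx.1 i) a b
  · intro j a b _
    simp_rw [hcol, ← mul_sum, abs_mul, abs_neg_one_pow, one_mul]
    exact EvenLine.abs_sum_staggered_le (hx.2 j) a b

end Staggered

section Counting

variable {N : ℕ}

theorem injective_decide_eq_one :
    Function.Injective fun x : {x : Fin N × Fin N → ℤ // IsSpinConfig N x ∧ Charge3 N x} =>
      fun p => decide (x.1 p = 1) := by
  intro x y hxy
  refine Subtype.ext (funext fun p => ?_)
  have hp := congrFun hxy p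
  rcases x.2.1 p with h1 | h1 <;> rcases y.2.1 p with h2 | h2 <;> simp_all

instance : Finite {x : Fin N × Fin N → ℤ // IsSpinConfig N x ∧ Charge3 N x} :=
  Finite.of_injective _ injective_decide_eq_one

end Counting

theorem zc3_le_two_pow (N : ℕ) : Zc3 N ≤ 2 ^ (N ^ 2) :=
  (Nat.card_le_card_of_injective _ injective_decide_eq_one).trans_eq <| by
    simp [Nat.card_eq_fintype_card, sq]

theorem zeven_le_zc3 (N : ℕ) : Zeven N ≤ Zc3 N :=
  Nat.card_le_card_of_injective
    (fun x => ⟨staggered x.1, isSpinConfig_staggered x.1, charge3_staggered x.2⟩)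
    fun _ _ h => Subtype.ext (staggered_injective (congrArg Subtype.val h))

theorem rpow_one_div_sq_le_two {n N : ℕ} (h : n ≤ 2 ^ (N ^ 2)) :
    (n : ℝ) ^ (1 / (N : ℝ) ^ 2) ≤ 2 := by
  rcases eq_or_ne N 0 with rfl | hN
  · norm_num
  calc (n : ℝ) ^ (1 / (N : ℝ) ^ 2) ≤ ((2 : ℝ) ^ (N ^ 2)) ^ ((N ^ 2 : ℕ) : ℝ)⁻¹ := by
        rw [one_div, Nat.cast_pow]
        gcongr
        exact_mod_cast h
    _ = 2 := Real.pow_rpow_inv_natCast zero_le_two (pow_ne_zero 2 hN)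

/-- On the two-dimensional lattice the growth rate of the charge(3) model is
at least that of the even model. -/
theorem even_growth_le_charge3_growth :
    limsup (fun N : ℕ => (Zeven N : ℝ) ^ (1 / (N : ℝ) ^ 2)) atTop ≤
      limsup (fun N : ℕ => (Zc3 N : ℝ) ^ (1 / (N : ℝ) ^ 2)) atTop := by
  refine limsup_le_limsup (Eventually.of_forall fun N => ?_)
    (isCoboundedUnder_le_of_le atTop fun N => by positivity)
    (isBoundedUnder_of ⟨2, fun N => rpow_one_div_sq_le_two (zc3_le_two_pow N)⟩)
  exact Real.rpow_le_rpow (by positivity) (by exact_mod_cast zeven_le_zc3 N) (by positivity)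
end

section
/- With ψ and R as defined, for every m ≥ 1 one has Σ_σ ψ(σ)² = Tr(R^m), where the sum runs over all σ : Fin m → Fin 2. -/
/-! Both sides are sums over closed walks. The trace of a cyclic product of matrices is the sum,
over closed walks `p`, of the products of the entries `L i (p i) (p (i + 1))`; so `ψ(σ)²` is a sum
over pairs `(x, y)` of closed walks in `Fin n`. Since each entry of `R` is the product of the two
corresponding entries of `F`, a closed walk `(x, σ, y)` for `R` contributes exactly the summand of
`ψ(σ)²` indexed by `(x, y)`. -/

/-- `ψ(σ)` is the trace of the cyclic product
`F(σ₀,σ₁) F(σ₁,σ₂) ⋯ F(σ_{m-1},σ₀)`; the cyclic successor is given by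
`finRotate`. -/
noncomputable def psiVec {n : ℕ} (m : ℕ)
    (F : Fin 2 → Fin 2 → Matrix (Fin n) (Fin n) ℝ)
    (σ : Fin m → Fin 2) : ℝ :=
  Matrix.trace (List.ofFn fun i : Fin m => F (σ i) (σ (finRotate m i))).prod

/-- The matrix `R`, indexed by `Fin n × Fin 2 × Fin n`, with
`R((α,a,α'),(β,b,β')) = F(a,b)(α,β) · F(a,b)(α',β')`. -/
def Rmat (n : ℕ) (F : Fin 2 → Fin 2 → Matrix (Fin n) (Fin n) ℝ) :
    Matrix (Fin n × Fin 2 × Fin n) (Fin n × Fin 2 × Fin n) ℝ :=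
  Matrix.of fun p q => F p.2.1 q.2.1 p.1 q.1 * F p.2.1 q.2.1 p.2.2 q.2.2

open Matrix Finset

section
variable {ι R : Type*} [Fintype ι] [DecidableEq ι] [CommSemiring R]

theorem Matrix.list_ofFn_prod_apply {k : ℕ} (L : Fin (k + 1) → Matrix ι ι R) (a b : ι) :
    (List.ofFn L).prod a b =
      ∑ p : Fin k → ι,
        ∏ i, L i ((Fin.cons a p : Fin (k + 1) → ι) i) ((Fin.snoc p b : Fin (k + 1) → ι) i) := by
  induction k generalizing a with
  | zero => simp [Fin.snoc]
  | succ k ih =>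
    rw [List.ofFn_succ, List.prod_cons, mul_apply, ← (Fin.consEquiv fun _ => ι).sum_comp,
      Fintype.sum_prod_type]
    simp_rw [ih, Finset.mul_sum]
    refine sum_congr rfl fun c _ => sum_congr rfl fun p _ => ?_
    simp [Fin.prod_univ_succ, Fin.consEquiv, ← Fin.cons_snoc_eq_snoc_cons]

theorem Fin.snoc_tail_eq_comp_finRotate {α : Type*} {k : ℕ} (q : Fin (k + 1) → α) :
    Fin.snoc (Fin.tail q) (q 0) = q ∘ finRotate (k + 1) := by
  funext i
  induction i using Fin.lastCases with
  | last => simp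
  | cast j => simp [Fin.tail]

theorem Matrix.trace_list_ofFn_prod {k : ℕ} (L : Fin (k + 1) → Matrix ι ι R) :
    trace (List.ofFn L).prod =
      ∑ p : Fin (k + 1) → ι, ∏ i, L i (p i) (p (finRotate (k + 1) i)) := by
  rw [← (Fin.consEquiv fun _ => ι).sum_comp, Fintype.sum_prod_type]
  refine sum_congr rfl fun a _ => ?_
  rw [diag_apply, list_ofFn_prod_apply]
  refine sum_congr rfl fun p _ => prod_congr rfl fun i _ => ?_
  exact congrArg (L i _) (congrFun (Fin.snoc_tail_eq_comp_finRotate (Fin.cons a p)) i)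

theorem Matrix.trace_pow_succ_eq_sum_prod (A : Matrix ι ι R) (k : ℕ) :
    trace (A ^ (k + 1)) = ∑ p : Fin (k + 1) → ι, ∏ i, A (p i) (p (finRotate (k + 1) i)) := by
  rw [← List.prod_replicate, ← List.ofFn_const, trace_list_ofFn_prod]

end

theorem Fintype.sum_arrow_prod {κ α β M : Type*} [Fintype κ] [DecidableEq κ] [Fintype α]
    [Fintype β] [AddCommMonoid M] (f : (κ → α × β) → M) :
    ∑ p, f p = ∑ a : κ → α, ∑ b : κ → β, f fun i => (a i, b i) := by
  rw [← (Equiv.arrowProdEquivProdArrow κ _ _).symm.sum_comp, Fintype.sum_prod_type]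
  rfl

theorem sum_psi_sq_eq_trace_pow_general (n m : ℕ) (hm : 1 ≤ m)
    (F : Fin 2 → Fin 2 → Matrix (Fin n) (Fin n) ℝ) :
    ∑ σ : Fin m → Fin 2, (psiVec m F σ) ^ 2 = Matrix.trace (Rmat n F ^ m) := by
  obtain ⟨k, rfl⟩ : ∃ k, m = k + 1 := ⟨m - 1, by omega⟩
  set ρ := finRotate (k + 1)
  calc ∑ σ : Fin (k + 1) → Fin 2, psiVec (k + 1) F σ ^ 2
      = ∑ σ : Fin (k + 1) → Fin 2, ∑ x : Fin (k + 1) → Fin n, ∑ y : Fin (k + 1) → Fin n,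
          ∏ i, Rmat n F (x i, σ i, y i) (x (ρ i), σ (ρ i), y (ρ i)) := by
        refine sum_congr rfl fun σ _ => ?_
        simp_rw [psiVec, trace_list_ofFn_prod, sq, sum_mul_sum, ← prod_mul_distrib]
        rfl
    _ = ∑ p : Fin (k + 1) → Fin n × Fin 2 × Fin n, ∏ i, Rmat n F (p i) (p (ρ i)) := by
        simp_rw [Fintype.sum_arrow_prod (β := Fin 2 × Fin n)]
        rw [sum_comm]
        simp_rw [Fintype.sum_arrow_prod]
    _ = trace (Rmat n F ^ (k + 1)) := (trace_pow_succ_eq_sum_prod _ k).symm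

/-- For all `n, m ≥ 1`: `Σ_σ ψ(σ)² = Tr(R^m)`. -/
theorem sum_psi_sq_eq_trace_pow (n m : ℕ) (hn : 1 ≤ n) (hm : 1 ≤ m)
    (F : Fin 2 → Fin 2 → Matrix (Fin n) (Fin n) ℝ) :
    ∑ σ : Fin m → Fin 2, (psiVec m F σ) ^ 2 = Matrix.trace (Rmat n F ^ m) :=
  sum_psi_sq_eq_trace_pow_general n m hm F
end
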